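/- arXiv:2112.05426 — 6 statements merged into one kernel-verified Lean document; each statement's English description precedes it below -/
import Mathlib

section
/- Let α > 1 be real and let k ≥ 4 be an even integer with k^{α−1} ≥ 1/(2^{α+1}(2^{α−1}−1)). Let P = {i/(2k) : 0 ≤ i ≤ 2k} ⊂ ℝ with source 0, and let q = −1. Then for every feasible range assignment ρ for P and every feasible range assignment ρ' for P ∪ {q} such that the number of points p ∈ P ∪ {q} with ρ(p) ≠ ρ'(p) is at most k (where ρ is extended by ρ(q) = 0), either cost_α(ρ) ≥ (1 + 1/(2^{α+2} k^{α−1}))·(2k)^{1−α} or cost_α(ρ') ≥ 1 + 1/(2^{α+2} k^{α−1}). (Since opt_α(P) = (2k)^{1−α} and opt_α(P∪{q}) = 1, this shows every k-stable update algorithm has approximation ratio at least 1 + 1/(2^{α+2} k^{α−1}); hence any stable approximation scheme must have stability parameter k(ε) = Ω((1/ε)^{1/(α−1)}).) -/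
set_option maxHeartbeats 1000000


open Finset

attribute [local instance] Classical.propDecidable

/-- A range assignment `ρ` for a finite point set `P` with source `s` is *feasible* if it is
nonnegative on `P` and every point of `P` is reachable from `s` via a sequence of points of `P`
in which each step is within the range of its starting point. -/
def Feasible {X : Type*} [MetricSpace X] (P : Finset X) (s : X) (ρ : X → ℝ) : Prop :=
  (∀ p ∈ P, 0 ≤ ρ p) ∧
  ∀ p ∈ P, ∃ (m : ℕ) (f : ℕ → X), f 0 = s ∧ f m = p ∧ (∀ i ≤ m, f i ∈ P) ∧
    ∀ i < m, dist (f i) (f (i + 1)) ≤ ρ (f i)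

/-- The cost `∑_{p ∈ P} ρ(p)^α` of a range assignment. -/
noncomputable def cost {X : Type*} (α : ℝ) (P : Finset X) (ρ : X → ℝ) : ℝ :=
  ∑ p ∈ P, ρ p ^ α

/-- The optimal broadcast cost: the infimum of `cost α P ρ` over feasible `ρ`. -/
noncomputable def opt {X : Type*} [MetricSpace X] (α : ℝ) (P : Finset X) (s : X) : ℝ :=
  sInf {c : ℝ | ∃ ρ : X → ℝ, Feasible P s ρ ∧ cost α P ρ = c}

private lemma jensen_aux {ι : Type*} (s : Finset ι) {α : ℝ} (hα : 1 ≤ α) (c : ι → ℝ)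
    (hc : ∀ i, 0 ≤ c i) :
    (∑ i ∈ s, c i) ^ α ≤ (s.card : ℝ) ^ (α - 1) * ∑ i ∈ s, c i ^ α := by
  have hα0 : (0:ℝ) < α := lt_of_lt_of_le one_pos hα
  have h := Real.inner_le_weight_mul_Lp_of_nonneg s hα (fun _ => (1:ℝ)) c
    (fun _ => zero_le_one) hc
  simp only [one_mul, Finset.sum_const, nsmul_eq_mul, mul_one] at h
  have hs0 : (0:ℝ) ≤ ∑ i ∈ s, c i := Finset.sum_nonneg fun i _ => hc i
  have hsa : (0:ℝ) ≤ ∑ i ∈ s, c i ^ α := Finset.sum_nonneg fun i _ => Real.rpow_nonneg (hc i) α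
  have hcard : (0:ℝ) ≤ (s.card:ℝ) := Nat.cast_nonneg _
  calc (∑ i ∈ s, c i) ^ α
      ≤ ((s.card:ℝ) ^ (1 - α⁻¹) * (∑ i ∈ s, c i ^ α) ^ α⁻¹) ^ α :=
        Real.rpow_le_rpow hs0 h hα0.le
    _ = (s.card:ℝ) ^ ((1 - α⁻¹)*α) * (∑ i ∈ s, c i ^ α) ^ (α⁻¹*α) := by
        rw [Real.mul_rpow (Real.rpow_nonneg hcard _) (Real.rpow_nonneg hsa _),
          ← Real.rpow_mul hcard, ← Real.rpow_mul hsa]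
    _ = (s.card : ℝ) ^ (α - 1) * ∑ i ∈ s, c i ^ α := by
        rw [show (1 - α⁻¹)*α = α - 1 by field_simp, inv_mul_cancel₀ (ne_of_gt hα0),
          Real.rpow_one]

private lemma key_ineq {α δ : ℝ} (hα : 1 < α) (hδ0 : 0 ≤ δ) (hδ8 : δ ≤ 1/8)
    (h2δ : 2*δ ≤ 2 ^ (α-1) - 1) : 2 + 2*δ ≤ (7/4:ℝ) ^ α + 1/4 := by
  have hβ0 : (0:ℝ) ≤ α - 1 := by linarith
  have hv1 : (1:ℝ) ≤ (7/4:ℝ) ^ (α-1) := by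
    have := Real.rpow_le_rpow_of_exponent_le (by norm_num : (1:ℝ) ≤ 7/4) hβ0
    rwa [Real.rpow_zero] at this
  set v : ℝ := (7/4:ℝ) ^ (α-1) with hv
  have hv0 : (0:ℝ) < v := by linarith
  have hG : (7/4:ℝ) ^ α = (7/4) * v := by
    have h' : (7/4:ℝ)^(1:ℝ) * (7/4:ℝ)^(α-1) = (7/4:ℝ)^α := by
      rw [← Real.rpow_add (by norm_num : (0:ℝ) < 7/4)]; congr 1; ring
    rw [hv, ← h', Real.rpow_one]
  set q : ℝ := v ^ (4:ℝ)⁻¹ with hq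
  have hq1 : (1:ℝ) ≤ q := by
    have := Real.rpow_le_rpow (zero_le_one) hv1 (by norm_num : (0:ℝ) ≤ (4:ℝ)⁻¹)
    rwa [Real.one_rpow] at this
  have hq4 : q ^ (4:ℕ) = v := by
    rw [hq, ← Real.rpow_natCast (v ^ (4:ℝ)⁻¹) 4, ← Real.rpow_mul hv0.le]
    norm_num
  have h2le : (2:ℝ) ≤ (7/4:ℝ) ^ ((5:ℝ)/4) := by
    have h4 : ((7/4:ℝ) ^ ((5:ℝ)/4)) ^ (4:ℕ) = (7/4:ℝ) ^ (5:ℝ) := by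
      rw [← Real.rpow_natCast ((7/4:ℝ) ^ ((5:ℝ)/4)) 4, ← Real.rpow_mul (by norm_num)]
      norm_num
    have h5 : (7/4:ℝ) ^ (5:ℝ) = 16807/1024 := by
      rw [show (5:ℝ) = ((5:ℕ):ℝ) by norm_num, Real.rpow_natCast]; norm_num
    refine le_of_pow_le_pow_left₀ (n := 4) (by norm_num) (Real.rpow_nonneg (by norm_num) _) ?_
    rw [h4, h5]; norm_num
  have hu2 : (2:ℝ)^(α-1) ≤ v * q := by
    calc (2:ℝ)^(α-1) ≤ ((7/4:ℝ) ^ ((5:ℝ)/4)) ^ (α-1) :=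
          Real.rpow_le_rpow (by norm_num) h2le hβ0
      _ = (7/4:ℝ) ^ ((α-1) * ((5:ℝ)/4)) := by
          rw [← Real.rpow_mul (by norm_num)]; ring_nf
      _ = v * q := by
          rw [hq, hv, ← Real.rpow_mul (by norm_num : (0:ℝ) ≤ 7/4),
            ← Real.rpow_add (by norm_num : (0:ℝ) < 7/4)]
          congr 1; ring
  have hq41 : 4*q ≤ q^(4:ℕ) + 3 := by nlinarith [sq_nonneg (q-1), sq_nonneg (q+1), hq1]
  rw [hG]
  rcases le_or_gt v 3 with hv3 | hv3
  · -- 2δ ≤ 2^{α-1} - 1 ≤ v*q - 1 ≤ v(v+3)/4 - 1 ≤ (7/4)(v-1)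
    have h1 : v * q ≤ v * ((v+3)/4) := by
      apply mul_le_mul_of_nonneg_left _ hv0.le
      rw [hq4] at hq41; linarith
    nlinarith [h2δ, hu2, mul_nonneg (sub_nonneg.mpr hv1) (sub_nonneg.mpr hv3)]
  · nlinarith [hδ8, hv3]

private lemma lemA {α K : ℝ} (hα : 1 < α) (hK : 4 ≤ K)
    (hklb : 1 / (2 ^ (α + 1) * (2 ^ (α - 1) - 1)) ≤ K ^ (α - 1)) :
    (6/5:ℝ) ≤ (2*K) ^ (α-1) := by
  have hβ0 : (0:ℝ) < α - 1 := by linarith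
  have hK0 : (0:ℝ) < K := by linarith
  have hu1 : (1:ℝ) < (2:ℝ)^(α-1) :=
    (Real.one_lt_rpow_iff_of_pos two_pos).mpr (Or.inl ⟨one_lt_two, hβ0⟩)
  set u : ℝ := (2:ℝ)^(α-1) with hu
  have h2K : (2*K)^(α-1) = u * K^(α-1) := Real.mul_rpow (by norm_num) hK0.le
  have hKu : u^(2:ℕ) ≤ K^(α-1) := by
    have h4 : (4:ℝ)^(α-1) = u^(2:ℕ) := by
      rw [hu, show (4:ℝ) = 2^(2:ℕ) by norm_num, ← Real.rpow_natCast (2:ℝ) 2,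
        ← Real.rpow_mul (by norm_num), ← Real.rpow_natCast ((2:ℝ)^(α-1)) 2,
        ← Real.rpow_mul (by norm_num)]
      congr 1; push_cast; ring
    rw [← h4]
    exact Real.rpow_le_rpow (by norm_num) hK hβ0.le
  have h2α1 : (2:ℝ)^(α+1) = 4*u := by
    rw [hu, show α+1 = 2+(α-1) by ring, Real.rpow_add two_pos,
      show (2:ℝ) = ((2:ℕ):ℝ) by norm_num, Real.rpow_natCast]
    norm_num
  have hpos : (0:ℝ) < 2^(α+1) * (2^(α-1) - 1) := by
    apply mul_pos (Real.rpow_pos_of_pos two_pos _); linarith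
  rw [div_le_iff₀ hpos] at hklb
  -- hklb : 1 ≤ K^(α-1) * (2^(α+1) * (2^(α-1) - 1))
  rw [h2α1] at hklb
  have hKβ0 : (0:ℝ) < K^(α-1) := Real.rpow_pos_of_pos hK0 _
  rw [h2K]
  rcases le_or_gt (16/15 : ℝ) u with hcase | hcase
  · -- u*K^β ≥ u^3 ≥ (16/15)^3 ≥ 6/5
    nlinarith [mul_le_mul_of_nonneg_left hKu (le_of_lt (lt_trans one_pos hu1)), hu1]
  · -- u*(u-1) < (16/15)(1/15), so K^β ≥ 225/64
    have h1 : u * (u - 1) ≤ 16/225 := by nlinarith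
    nlinarith [hklb, hKβ0, hu1]

/-- Lower bound for stable approximation schemes in ℝ¹: on the instance
`P = {i/(2k) : 0 ≤ i ≤ 2k}` with the insertion of `q = -1`, any update modifying at most `k`
ranges pays a factor at least `1 + 1/(2^{α+2} k^{α-1})` over the optimum, before or after. -/
theorem sas_lower_bound_R1 (α : ℝ) (hα : 1 < α) (k : ℕ) (hk4 : 4 ≤ k) (hkeven : Even k)
    (hklb : (1:ℝ) / (2 ^ (α + 1) * (2 ^ (α - 1) - 1)) ≤ (k : ℝ) ^ (α - 1))
    (P : Finset ℝ) (hP : P = (Finset.range (2 * k + 1)).image (fun i => (i : ℝ) / (2 * k)))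
    (ρ ρ' : ℝ → ℝ)
    (hρ : Feasible P 0 ρ)
    (hρ' : Feasible (insert (-1 : ℝ) P) 0 ρ')
    (hstable : {p ∈ insert (-1 : ℝ) (P : Set ℝ) |
        ρ' p ≠ Function.update ρ (-1) 0 p}.ncard ≤ k) :
    (1 + 1 / (2 ^ (α + 2) * (k : ℝ) ^ (α - 1))) * (2 * (k : ℝ)) ^ ((1:ℝ) - α) ≤ cost α P ρ ∨
    1 + 1 / (2 ^ (α + 2) * (k : ℝ) ^ (α - 1)) ≤ cost α (insert (-1 : ℝ) P) ρ' := by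
  classical
  have hk0 : 0 < k := by omega
  set K : ℝ := (k:ℝ) with hKdef
  have hK0 : (0:ℝ) < K := by rw [hKdef]; exact_mod_cast hk0
  have hK4 : (4:ℝ) ≤ K := by rw [hKdef]; exact_mod_cast hk4
  have hN0 : (0:ℝ) < 2*K := by linarith
  have hβ0 : (0:ℝ) < α - 1 := by linarith
  have hKβ : (0:ℝ) < K ^ (α-1) := Real.rpow_pos_of_pos hK0 _
  have h2α2 : (0:ℝ) < (2:ℝ) ^ (α+2) := Real.rpow_pos_of_pos two_pos _
  set δ : ℝ := 1 / (2 ^ (α + 2) * K ^ (α - 1)) with hδdef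
  set B : ℝ := (2*K) ^ ((1:ℝ) - α) with hBdef
  have hδ0 : 0 < δ := by rw [hδdef]; positivity
  have hBpos : 0 < B := Real.rpow_pos_of_pos hN0 _
  have hNα : (0:ℝ) < (2*K)^α := Real.rpow_pos_of_pos hN0 _
  have hKs : K^((1:ℝ)-α) * K^(α-1) = 1 := by
    rw [← Real.rpow_add hK0, show (1:ℝ)-α+(α-1) = 0 by ring, Real.rpow_zero]
  have hBA : B * (2*K)^α = 2*K := by
    rw [hBdef, ← Real.rpow_add hN0, show (1:ℝ)-α+α = 1 by ring, Real.rpow_one]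
  have hδB : 8 * δ = B := by
    have h2s : (2:ℝ)^((1:ℝ)-α) * (2:ℝ)^(α+2) = 8 := by
      rw [← Real.rpow_add two_pos, show (1:ℝ)-α+(α+2) = 3 by ring,
        show (3:ℝ) = ((3:ℕ):ℝ) by norm_num, Real.rpow_natCast]
      norm_num
    have hBval : B = (2:ℝ)^((1:ℝ)-α) * K^((1:ℝ)-α) := by
      rw [hBdef, Real.mul_rpow (by norm_num) hK0.le]
    rw [hδdef, hBval]
    rw [show (8:ℝ) * (1 / (2 ^ (α + 2) * K ^ (α - 1))) = 8 / (2 ^ (α + 2) * K ^ (α - 1)) by ring,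
      div_eq_iff (by positivity)]
    calc (8:ℝ) = ((2:ℝ)^((1:ℝ)-α) * (2:ℝ)^(α+2)) * (K^((1:ℝ)-α) * K^(α-1)) := by
          rw [h2s, hKs]; norm_num
      _ = (2:ℝ)^((1:ℝ)-α) * K^((1:ℝ)-α) * ((2:ℝ)^(α+2) * K^(α-1)) := by ring
  -- basic facts about P
  have hmem : ∀ p ∈ P, ∃ j : ℕ, j ≤ 2*k ∧ p = (j:ℝ)/(2*K) := by
    intro p hp
    rw [hP] at hp
    simp at hp
    obtain ⟨j, hj, rfl⟩ := hp
    exact ⟨j, by omega, rfl⟩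
  have hmem' : ∀ j : ℕ, j ≤ 2*k → (j:ℝ)/(2*K) ∈ P := by
    intro j hj
    rw [hP]
    simp
    exact ⟨j, by omega, rfl⟩
  have hrange : ∀ p ∈ P, 0 ≤ p ∧ p ≤ 1 := by
    intro p hp
    obtain ⟨j, hj, rfl⟩ := hmem p hp
    refine ⟨by positivity, ?_⟩
    rw [div_le_one hN0]
    calc (j:ℝ) ≤ ((2*k:ℕ):ℝ) := by exact_mod_cast hj
      _ = 2*K := by push_cast [hKdef]; ring
  have hgrid : ∀ p ∈ P, ∀ i : ℕ, (i:ℝ)/(2*K) < p → ((i:ℝ)+1)/(2*K) ≤ p := by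
    intro p hp i hip
    obtain ⟨j, hj, rfl⟩ := hmem p hp
    have hij : (i:ℝ) < (j:ℝ) := (div_lt_div_iff_of_pos_right hN0).mp hip
    have hij' : i < j := by exact_mod_cast hij
    have h1 : (i:ℝ)+1 ≤ (j:ℝ) := by exact_mod_cast hij'
    exact (div_le_div_iff_of_pos_right hN0).mpr h1
  have h0P : (0:ℝ) ∈ P := by
    have := hmem' 0 (by omega)
    simpa using this
  -- crossing existence
  have hcross : ∀ i : ℕ, i < 2*k →
      ∃ p ∈ P, p ≤ (i:ℝ)/(2*K) ∧ ((i:ℝ)+1)/(2*K) ≤ p + ρ p := by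
    intro i hi
    have hyP : (((i+1:ℕ)):ℝ)/(2*K) ∈ P := hmem' (i+1) (by omega)
    obtain ⟨m, f, hf0, hfm, hfP, hstep⟩ := hρ.2 _ hyP
    push_cast at hfm
    set Q : ℕ → Prop := fun j => f j ≤ (i:ℝ)/(2*K) with hQ
    have hQ0 : Q 0 := by simp only [hQ, hf0]; positivity
    set j := Nat.findGreatest Q m with hj
    have hQj : Q j := Nat.findGreatest_spec (Nat.zero_le m) hQ0
    have hjm : j ≤ m := Nat.findGreatest_le m
    have hQm : ¬ Q m := by
      simp only [hQ, hfm, not_le]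
      exact (div_lt_div_iff_of_pos_right hN0).mpr (by linarith)
    have hjltm : j < m := lt_of_le_of_ne hjm (fun h => hQm (h ▸ hQj))
    have hQj1 : ¬ Q (j+1) := Nat.findGreatest_is_greatest (n := m) (by omega) (by omega)
    refine ⟨f j, hfP j (by omega), hQj, ?_⟩
    have hstepj := hstep j hjltm
    have h1 : f (j+1) - f j ≤ dist (f j) (f (j+1)) := by
      rw [Real.dist_eq, abs_sub_comm]
      exact le_abs_self _
    have hfj1 : ((i:ℝ)+1)/(2*K) ≤ f (j+1) := by
      have hfj1P : f (j+1) ∈ P := hfP (j+1) (by omega)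
      have hlt : (i:ℝ)/(2*K) < f (j+1) := not_le.mp hQj1
      exact hgrid _ hfj1P i hlt
    linarith
  -- crossing counts
  set T : ℝ → Finset ℕ := fun p => (Finset.range (2*k)).filter
      (fun i => p ≤ (i:ℝ)/(2*K) ∧ ((i:ℝ)+1)/(2*K) ≤ p + ρ p) with hT
  have hcount : ∀ p ∈ P, ((T p).card : ℝ) / (2*K) ≤ ρ p := by
    intro p hp
    rcases Finset.eq_empty_or_nonempty (T p) with he | hne
    · rw [he]
      simpa using hρ.1 p hp
    · set i1 := (T p).min' hne with hi1
      set i2 := (T p).max' hne with hi2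
      have h1 : i1 ∈ T p := Finset.min'_mem _ _
      have h2 : i2 ∈ T p := Finset.max'_mem _ _
      have hm1 := (Finset.mem_filter.mp h1).2
      have hm2 := (Finset.mem_filter.mp h2).2
      have hsub : T p ⊆ Finset.Icc i1 i2 := fun x hx =>
        Finset.mem_Icc.mpr ⟨Finset.min'_le _ _ hx, Finset.le_max' _ _ hx⟩
      have hi12 : i1 ≤ i2 := Finset.min'_le _ _ h2
      have hcard : (T p).card ≤ i2 + 1 - i1 := by
        calc (T p).card ≤ (Finset.Icc i1 i2).card := Finset.card_le_card hsub
          _ = i2 + 1 - i1 := Nat.card_Icc i1 i2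
      have hcardR : ((T p).card : ℝ) ≤ (i2:ℝ) + 1 - (i1:ℝ) := by
        have h3 : ((T p).card:ℝ) ≤ ((i2 + 1 - i1 : ℕ):ℝ) := by exact_mod_cast hcard
        have h4 : ((i2 + 1 - i1 : ℕ):ℝ) = (i2:ℝ) + 1 - (i1:ℝ) := by
          have : i1 ≤ i2 + 1 := by omega
          push_cast [this]
          ring
        linarith [h3, h4.le, h4.ge]
      have hA : ((T p).card : ℝ)/(2*K) ≤ ((i2:ℝ)+1-(i1:ℝ))/(2*K) :=
        (div_le_div_iff_of_pos_right hN0).mpr hcardR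
      have hB' : ((i2:ℝ)+1-(i1:ℝ))/(2*K) ≤ ρ p := by
        have e : ((i2:ℝ)+1-(i1:ℝ))/(2*K) = ((i2:ℝ)+1)/(2*K) - (i1:ℝ)/(2*K) := by ring
        rw [e]
        linarith [hm1.1, hm2.2]
      linarith
  have hcover : Finset.range (2*k) ⊆ P.biUnion T := by
    intro i hi
    obtain ⟨p, hpP, ha, hb⟩ := hcross i (Finset.mem_range.mp hi)
    exact Finset.mem_biUnion.mpr ⟨p, hpP, Finset.mem_filter.mpr ⟨hi, ha, hb⟩⟩
  have hsumT : 2*k ≤ ∑ p ∈ P, (T p).card := by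
    calc 2*k = (Finset.range (2*k)).card := (Finset.card_range _).symm
      _ ≤ (P.biUnion T).card := Finset.card_le_card hcover
      _ ≤ ∑ p ∈ P, (T p).card := Finset.card_biUnion_le
  -- big point for ρ'
  have hbig : ∃ x ∈ P, 1 ≤ ρ' x := by
    obtain ⟨m, f, hf0, hfm, hfP, hstep⟩ := hρ'.2 (-1) (Finset.mem_insert_self _ _)
    have hex : ∃ j, f j = -1 := ⟨m, hfm⟩
    have hfj : f (Nat.find hex) = -1 := Nat.find_spec hex
    set j := Nat.find hex with hj
    have hjm : j ≤ m := Nat.find_min' hex hfm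
    have hj0 : j ≠ 0 := by
      intro h
      rw [h, hf0] at hfj
      norm_num at hfj
    have hjpred : ¬ f (j-1) = -1 := Nat.find_min hex (by omega)
    have hx : f (j-1) ∈ P := by
      have hmem2 := hfP (j-1) (by omega)
      rcases Finset.mem_insert.mp hmem2 with h | h
      · exact absurd h hjpred
      · exact h
    have hx0 : 0 ≤ f (j-1) := (hrange _ hx).1
    have hst := hstep (j-1) (by omega)
    rw [show j - 1 + 1 = j by omega, hfj, Real.dist_eq] at hst
    refine ⟨f (j-1), hx, ?_⟩
    have habs : |f (j-1) - (-1)| = f (j-1) + 1 := by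
      rw [abs_of_nonneg (by linarith)]; ring
    rw [habs] at hst
    linarith
  -- changed and unchanged sets
  set ch : Finset ℝ := P.filter (fun p => ρ' p ≠ ρ p) with hch
  set W : Finset ℝ := P.filter (fun p => ¬ ρ' p ≠ ρ p) with hWdef
  have hchk : ch.card ≤ k := by
    have hsub : (ch : Set ℝ) ⊆ {p ∈ insert (-1 : ℝ) (P : Set ℝ) |
        ρ' p ≠ Function.update ρ (-1) 0 p} := by
      intro p hp
      simp only [hch, Finset.coe_filter, Set.mem_setOf_eq] at hp
      have hpne : p ≠ -1 := by
        intro h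
        have := (hrange p hp.1).1
        rw [h] at this
        norm_num at this
      refine ⟨Set.mem_insert_iff.mpr (Or.inr hp.1), ?_⟩
      rw [Function.update_of_ne hpne]
      exact hp.2
    have hfin : {p ∈ insert (-1 : ℝ) (P : Set ℝ) |
        ρ' p ≠ Function.update ρ (-1) 0 p}.Finite :=
      (Set.Finite.insert (-1) P.finite_toSet).subset (Set.sep_subset _ _)
    calc ch.card = (ch : Set ℝ).ncard := (Set.ncard_coe_finset ch).symm
      _ ≤ _ := Set.ncard_le_ncard hsub hfin
      _ ≤ k := hstable
  -- main case split
  by_cases hL : (1 + δ) * B ≤ cost α P ρ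
  · left; exact hL
  · right
    push_neg at hL
    -- (1+δ)B < 1
    have h65 : (6/5:ℝ) ≤ (2*K)^(α-1) := lemA hα hK4 hklb
    have hB56 : B ≤ 5/6 := by
      have hBe : B * (2*K)^(α-1) = 1 := by
        rw [hBdef, ← Real.rpow_add hN0, show (1:ℝ)-α+(α-1) = 0 by ring, Real.rpow_zero]
      nlinarith [mul_le_mul_of_nonneg_left h65 hBpos.le]
    have hδ48 : δ ≤ 5/48 := by linarith
    have hAB : (1+δ)*B < 1 := by nlinarith [mul_le_mul_of_nonneg_right hδ48 hBpos.le]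
    obtain ⟨x, hxP, hx1⟩ := hbig
    have hxch : x ∈ ch := by
      rw [hch]
      refine Finset.mem_filter.mpr ⟨hxP, ?_⟩
      intro heq
      have h1x : (1:ℝ) ≤ ρ x := heq ▸ hx1
      have h1xα : (1:ℝ) ≤ ρ x ^ α := by
        have := Real.rpow_le_rpow (zero_le_one) h1x (by linarith : (0:ℝ) ≤ α)
        rwa [Real.one_rpow] at this
      have hcost1 : (1:ℝ) ≤ cost α P ρ :=
        le_trans h1xα (Finset.single_le_sum
          (fun p hp => Real.rpow_nonneg (hρ.1 p hp) α) hxP)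
      linarith
    -- 2δ bound from hklb
    have h2β1 : (1:ℝ) < (2:ℝ)^(α-1) :=
      (Real.one_lt_rpow_iff_of_pos two_pos).mpr (Or.inl ⟨one_lt_two, hβ0⟩)
    have h2δ : 2*δ ≤ (2:ℝ)^(α-1) - 1 := by
      have hpos2 : (0:ℝ) < 2^(α+1) * (2^(α-1)-1) := by
        apply mul_pos (Real.rpow_pos_of_pos two_pos _)
        linarith
      rw [div_le_iff₀ hpos2] at hklb
      have h22 : (2:ℝ)^(α+2) = 2^(α+1) * 2 := by
        have h23 : (2:ℝ)^(α+1) * (2:ℝ)^(1:ℝ) = (2:ℝ)^(α+2) := by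
          rw [← Real.rpow_add two_pos]; congr 1; ring
        rw [← h23, Real.rpow_one]
      have he : 2*δ = 1/(2^(α+1)*K^(α-1)) := by
        rw [hδdef, h22]
        field_simp
      rw [he, div_le_iff₀ (by positivity)]
      calc (1:ℝ) ≤ K ^ (α - 1) * (2 ^ (α + 1) * (2 ^ (α - 1) - 1)) := hklb
        _ = (2^(α-1) - 1) * (2^(α+1) * K^(α-1)) := by ring
    have hδ18 : δ ≤ 1/8 := by linarith
    have hKI : 2 + 2*δ ≤ (7/4:ℝ)^α + 1/4 := key_ineq hα hδ0.le hδ18 h2δ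
    -- key claim: δ ≤ ∑_W ρ^α
    have hρT : ∀ p ∈ P, (((T p).card:ℝ)/(2*K)) ^ α ≤ ρ p ^ α := by
      intro p hp
      exact Real.rpow_le_rpow (div_nonneg (Nat.cast_nonneg _) hN0.le) (hcount p hp)
        (by linarith)
    have hTc : ∀ p : ℝ, ((T p).card:ℝ) / (2*K)^α ≤ (((T p).card:ℝ)/(2*K)) ^ α := by
      intro p
      rw [Real.div_rpow (Nat.cast_nonneg _) hN0.le]
      rcases Nat.eq_zero_or_pos (T p).card with h | h
      · simp [h, Real.zero_rpow (show α ≠ 0 by linarith)]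
      · have h1 : (1:ℝ) ≤ ((T p).card:ℝ) := by exact_mod_cast h
        have h2 : ((T p).card:ℝ) ≤ ((T p).card:ℝ)^α := by
          have := Real.rpow_le_rpow_of_exponent_le h1 hα.le
          rwa [Real.rpow_one] at this
        exact (div_le_div_iff_of_pos_right hNα).mpr h2
    have hWsum' : ∀ q ∈ W, q ∈ P := fun q hq => (Finset.mem_filter.mp hq).1
    have hwW : ((∑ p ∈ W, (T p).card : ℕ):ℝ)/(2*K)^α ≤ ∑ p ∈ W, ρ p ^ α := by
      calc ((∑ p ∈ W, (T p).card : ℕ):ℝ)/(2*K)^α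
          = ∑ p ∈ W, ((T p).card:ℝ)/(2*K)^α := by
            push_cast
            rw [Finset.sum_div]
        _ ≤ ∑ p ∈ W, ρ p ^ α :=
            Finset.sum_le_sum (fun p hp => le_trans (hTc p) (hρT p (hWsum' p hp)))
    have hWδ : δ ≤ ∑ p ∈ W, ρ p ^ α := by
      by_contra hcon
      push_neg at hcon
      set w : ℕ := ∑ p ∈ W, (T p).card with hw
      have hwlt : (w:ℝ) < K/4 := by
        have h1 : (w:ℝ)/(2*K)^α < δ := lt_of_le_of_lt hwW hcon
        rw [div_lt_iff₀ hNα] at h1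
        have h2 : δ * (2*K)^α = K/4 := by
          have h3 : (8*δ) * (2*K)^α = 2*K := by rw [hδB]; exact hBA
          linarith [h3]
        rw [h2] at h1
        exact h1
      set C : ℕ := ∑ p ∈ ch, (T p).card with hC
      have hCw : 2*k ≤ C + w := by
        calc 2*k ≤ ∑ p ∈ P, (T p).card := hsumT
          _ = C + w := (Finset.sum_filter_add_sum_filter_not P _ _).symm
      have hCR : 2*K - (w:ℝ) ≤ (C:ℝ) := by
        have h1 : ((2*k:ℕ):ℝ) ≤ ((C + w:ℕ):ℝ) := by exact_mod_cast hCw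
        push_cast at h1
        linarith
      have hC0 : (0:ℝ) < (C:ℝ) := by linarith
      -- Jensen on ch
      have hjen := jensen_aux ch hα.le (fun p => ((T p).card:ℝ)) (fun p => Nat.cast_nonneg _)
      have hCcast : ∑ p ∈ ch, ((T p).card:ℝ) = (C:ℝ) := by
        rw [hC]; push_cast; ring
      rw [hCcast] at hjen
      have hnk : (ch.card:ℝ)^(α-1) ≤ K^(α-1) :=
        Real.rpow_le_rpow (Nat.cast_nonneg _) (by rw [hKdef]; exact_mod_cast hchk) hβ0.le
      have hS0 : (0:ℝ) ≤ ∑ p ∈ ch, ((T p).card:ℝ)^α :=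
        Finset.sum_nonneg (fun p _ => Real.rpow_nonneg (Nat.cast_nonneg _) α)
      have h3 : K^((1:ℝ)-α) * (C:ℝ)^α ≤ ∑ p ∈ ch, ((T p).card:ℝ)^α := by
        have h4 : (C:ℝ)^α ≤ K^(α-1) * ∑ p ∈ ch, ((T p).card:ℝ)^α :=
          le_trans hjen (mul_le_mul_of_nonneg_right hnk hS0)
        have h5 := mul_le_mul_of_nonneg_left h4 (Real.rpow_nonneg hK0.le ((1:ℝ)-α))
        calc K^((1:ℝ)-α)*(C:ℝ)^α
            ≤ K^((1:ℝ)-α)*(K^(α-1) * ∑ p ∈ ch, ((T p).card:ℝ)^α) := h5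
          _ = (K^((1:ℝ)-α)*K^(α-1)) * ∑ p ∈ ch, ((T p).card:ℝ)^α := by ring
          _ = ∑ p ∈ ch, ((T p).card:ℝ)^α := by rw [hKs, one_mul]
      have hSch : K^((1:ℝ)-α) * (C:ℝ)^α / (2*K)^α ≤ ∑ p ∈ ch, ρ p ^ α := by
        have hch1 : ∑ p ∈ ch, (((T p).card:ℝ)/(2*K))^α ≤ ∑ p ∈ ch, ρ p ^ α :=
          Finset.sum_le_sum (fun p hp => hρT p (Finset.mem_filter.mp hp).1)
        have hch2 : ∑ p ∈ ch, (((T p).card:ℝ)/(2*K))^α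
            = (∑ p ∈ ch, ((T p).card:ℝ)^α) / (2*K)^α := by
          rw [Finset.sum_div]
          refine Finset.sum_congr rfl (fun p hp => ?_)
          rw [Real.div_rpow (Nat.cast_nonneg _) hN0.le]
        calc K^((1:ℝ)-α) * (C:ℝ)^α / (2*K)^α
            ≤ (∑ p ∈ ch, ((T p).card:ℝ)^α)/(2*K)^α :=
              (div_le_div_iff_of_pos_right hNα).mpr h3
          _ = ∑ p ∈ ch, (((T p).card:ℝ)/(2*K))^α := hch2.symm
          _ ≤ ∑ p ∈ ch, ρ p ^ α := hch1
      -- Bernoulli step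
      have hd0 : (0:ℝ) ≤ K/4 - (w:ℝ) := by linarith
      have ha0 : (0:ℝ) < (7/4)*K := by linarith
      have hv'1 : (1:ℝ) ≤ (7/4:ℝ)^(α-1) := by
        have := Real.rpow_le_rpow_of_exponent_le (by norm_num : (1:ℝ) ≤ 7/4) hβ0.le
        rwa [Real.rpow_zero] at this
      have hG75 : (7/4:ℝ)^α = (7/4) * (7/4:ℝ)^(α-1) := by
        have h' : (7/4:ℝ)^(1:ℝ) * (7/4:ℝ)^(α-1) = (7/4:ℝ)^α := by
          rw [← Real.rpow_add (by norm_num : (0:ℝ) < 7/4)]; congr 1; ring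
        rw [← h', Real.rpow_one]
      have hbern : ((7/4)*K)^α * (1 + α*((K/4 - (w:ℝ))/((7/4)*K)))
          ≤ (((7/4)*K) + (K/4 - (w:ℝ)))^α := by
        have hs1 : (-1:ℝ) ≤ (K/4 - (w:ℝ))/((7/4)*K) :=
          le_trans (by norm_num) (div_nonneg hd0 ha0.le)
        have hber := one_add_mul_self_le_rpow_one_add hs1 hα.le
        have he2 : ((7/4)*K)^α * (1 + ((K/4 - (w:ℝ))/((7/4)*K)))^α
            = (((7/4)*K) + (K/4 - (w:ℝ)))^α := by
          rw [← Real.mul_rpow ha0.le (add_nonneg zero_le_one (div_nonneg hd0 ha0.le))]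
          congr 1
          field_simp
          try ring
        calc ((7/4)*K)^α * (1 + α*((K/4 - (w:ℝ))/((7/4)*K)))
            ≤ ((7/4)*K)^α * (1 + ((K/4 - (w:ℝ))/((7/4)*K)))^α :=
              mul_le_mul_of_nonneg_left hber (Real.rpow_nonneg ha0.le α)
          _ = _ := he2
      have hmon : (((7/4)*K) + (K/4 - (w:ℝ)))^α ≤ (C:ℝ)^α :=
        Real.rpow_le_rpow (by linarith) (by linarith) (by linarith)
      have hmul := mul_le_mul_of_nonneg_left (le_trans hbern hmon)
        (Real.rpow_nonneg hK0.le ((1:ℝ)-α))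
      -- LHS simplification
      have hKK : K^((1:ℝ)-α) * K^α = K := by
        rw [← Real.rpow_add hK0, show (1:ℝ)-α+α = 1 by ring, Real.rpow_one]
      have hLHS : K^((1:ℝ)-α) * (((7/4)*K)^α * (1 + α*((K/4 - (w:ℝ))/((7/4)*K))))
          = (7/4:ℝ)^α * K + (7/4:ℝ)^(α-1) * α * (K/4 - (w:ℝ)) := by
        rw [Real.mul_rpow (by norm_num : (0:ℝ) ≤ 7/4) hK0.le]
        have e1 : K^((1:ℝ)-α) * ((7/4:ℝ)^α * K^α * (1 + α*((K/4 - (w:ℝ))/((7/4)*K))))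
            = (7/4:ℝ)^α * (K^((1:ℝ)-α) * K^α) * (1 + α*((K/4 - (w:ℝ))/((7/4)*K))) := by
          ring
        rw [e1, hKK, hG75]
        field_simp
      rw [hLHS] at hmul
      -- (7/4)^{α-1} α d ≥ d
      have hd2 : (K/4 - (w:ℝ)) ≤ (7/4:ℝ)^(α-1) * α * (K/4 - (w:ℝ)) := by
        have h1α : (1:ℝ) ≤ (7/4:ℝ)^(α-1) * α :=
          le_trans (by norm_num)
            (mul_le_mul hv'1 hα.le zero_le_one (le_trans zero_le_one hv'1))
        have h2' := mul_le_mul_of_nonneg_right h1α hd0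
        rwa [one_mul] at h2'
      have hstar : (7/4:ℝ)^α * K + (K/4 - (w:ℝ)) ≤ K^((1:ℝ)-α) * (C:ℝ)^α := by
        calc (7/4:ℝ)^α * K + (K/4 - (w:ℝ))
            ≤ (7/4:ℝ)^α * K + (7/4:ℝ)^(α-1) * α * (K/4 - (w:ℝ)) := by linarith
          _ ≤ K^((1:ℝ)-α) * (C:ℝ)^α := hmul
      -- total
      have htot : (1+δ)*B ≤ (K^((1:ℝ)-α) * (C:ℝ)^α + (w:ℝ))/(2*K)^α := by
        rw [le_div_iff₀ hNα]
        have h6 : (1+δ)*B*(2*K)^α = (1+δ)*(2*K) := by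
          rw [mul_assoc, hBA]
        rw [h6]
        have h7 : (2 + 2*δ)*K ≤ ((7/4:ℝ)^α + 1/4)*K :=
          mul_le_mul_of_nonneg_right hKI hK0.le
        calc (1+δ)*(2*K) = (2+2*δ)*K := by ring
          _ ≤ ((7/4:ℝ)^α + 1/4)*K := h7
          _ = (7/4:ℝ)^α*K + (K/4 - (w:ℝ)) + (w:ℝ) := by ring
          _ ≤ K^((1:ℝ)-α) * (C:ℝ)^α + (w:ℝ) := by linarith [hstar]
      have hcost_eq : cost α P ρ = ∑ p ∈ ch, ρ p^α + ∑ p ∈ W, ρ p^α := by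
        rw [cost]
        exact (Finset.sum_filter_add_sum_filter_not P _ _).symm
      have hfinal : (1+δ)*B ≤ cost α P ρ := by
        calc (1+δ)*B ≤ (K^((1:ℝ)-α) * (C:ℝ)^α + (w:ℝ))/(2*K)^α := htot
          _ = K^((1:ℝ)-α)*(C:ℝ)^α/(2*K)^α + (w:ℝ)/(2*K)^α := add_div _ _ _
          _ ≤ ∑ p ∈ ch, ρ p^α + ∑ p ∈ W, ρ p^α := add_le_add hSch hwW
          _ = cost α P ρ := hcost_eq.symm
      linarith
    -- conclude
    have hxW : x ∉ W := by
      intro hxW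
      exact (Finset.mem_filter.mp hxch).2 (not_not.mp (Finset.mem_filter.mp hxW).2)
    have hsub2 : insert x W ⊆ insert (-1:ℝ) P := by
      intro p hp
      rcases Finset.mem_insert.mp hp with rfl | hp2
      · exact Finset.mem_insert_of_mem hxP
      · exact Finset.mem_insert_of_mem (Finset.filter_subset _ _ hp2)
    have hsum : ∑ p ∈ insert x W, ρ' p ^ α ≤ cost α (insert (-1:ℝ) P) ρ' := by
      rw [cost]
      refine Finset.sum_le_sum_of_subset_of_nonneg hsub2 (fun p hp _ => ?_)
      exact Real.rpow_nonneg (hρ'.1 p hp) α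
    rw [Finset.sum_insert hxW] at hsum
    have hx1α : (1:ℝ) ≤ ρ' x ^ α := by
      have := Real.rpow_le_rpow (zero_le_one) hx1 (by linarith : (0:ℝ) ≤ α)
      rwa [Real.one_rpow] at this
    have hWρ : ∑ p ∈ W, ρ' p ^ α = ∑ p ∈ W, ρ p ^ α :=
      Finset.sum_congr rfl (fun p hp => by
        rw [not_not.mp (Finset.mem_filter.mp hp).2])
    rw [hWρ] at hsum
    linarith
end

section
/- Let α > 1, let P be a finite set of points on the circle S¹ of circumference 1 (the quotient ℝ/ℤ with its arc-length metric), and let s ∈ P be the source. Then there exists a map φ : P → ℝ with φ(s) = 0 such that dist_{S¹}(p,q) ≤ |φ(p) − φ(q)| for all p, q ∈ P, and such that the infimum of cost_α over all feasible range assignments for P on the circle (with source s) equals the infimum of cost_α over all feasible range assignments for the image φ(P) ⊂ ℝ with the Euclidean distance (with source 0). (That is, an optimal range assignment on S¹ can always be obtained by cutting the circle at an appropriate point and solving the resulting instance in ℝ¹.) -/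
open Finset

attribute [local instance] Classical.propDecidable

/-!
Take a range assignment `ρ` that is optimal on the circle; one exists because shrinking every
range to the farthest point it covers leaves only finitely many candidate costs. Cut the circle
at `s` and unroll it along the hops of `ρ`: when a point `p` is first reached from `q`, put it on
the line at `φ p = φ q + x`, where `x` is the signed length of the shorter arc from `q` to `p`.
Then `φ p` is a lift of `p - s`, so `φ` does not shrink distances and every feasible assignment
on `φ(P)` pulls back to one on `P` of the same cost; conversely the hops of `ρ` along which the
points were reached keep their length under `φ`, so `ρ` pushes forward to a feasible assignment
on `φ(P)` of cost `opt α P s`.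
-/

open Relation

section Cost

variable {X Y : Type*} {P : Finset X} {α : ℝ}

theorem cost_nonneg {ρ : X → ℝ} (hρ : ∀ p ∈ P, 0 ≤ ρ p) : 0 ≤ cost α P ρ :=
  sum_nonneg fun p hp => Real.rpow_nonneg (hρ p hp) α

theorem cost_mono {ρ ρ' : X → ℝ} (hα : 0 ≤ α) (h₀ : ∀ p ∈ P, 0 ≤ ρ' p)
    (h : ∀ p ∈ P, ρ' p ≤ ρ p) : cost α P ρ' ≤ cost α P ρ :=
  sum_le_sum fun p hp => Real.rpow_le_rpow (h₀ p hp) (h p hp) hα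

theorem cost_comp {φ : X → Y} (hφ : Set.InjOn φ P) (σ : Y → ℝ) :
    cost α P (σ ∘ φ) = cost α (P.image φ) σ :=
  (sum_image (f := fun y => σ y ^ α) hφ).symm

theorem finite_setOf_cost (P : Finset X) (D : Finset ℝ) :
    {c | ∃ ρ : X → ℝ, (∀ p ∈ P, ρ p ∈ D) ∧ cost α P ρ = c}.Finite := by
  refine (Set.finite_range fun g : P → D => ∑ p, (g p : ℝ) ^ α).subset ?_
  rintro _ ⟨ρ, hρ, rfl⟩
  exact ⟨fun p => ⟨ρ p, hρ p p.2⟩, sum_attach P fun p => ρ p ^ α⟩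

end Cost

-- The distance `d` is a parameter so that hops can also be measured between images on the line.
def Hop {X : Type*} (P : Finset X) (d : X → X → ℝ) (ρ : X → ℝ) (p q : X) : Prop :=
  p ∈ P ∧ q ∈ P ∧ d p q ≤ ρ p

theorem Relation.ReflTransGen.exists_rel_of_mem_of_not_mem {β : Type*} {r : β → β → Prop}
    {a b : β} {S : Set β} (h : ReflTransGen r a b) (ha : a ∈ S) (hb : b ∉ S) :
    ∃ x ∈ S, ∃ y ∉ S, r x y := by
  induction h with
  | refl => exact absurd ha hb
  | @tail c d _ hcd ih =>
    by_cases hc : c ∈ S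
    · exact ⟨c, hc, d, hb, hcd⟩
    · exact ih hc

section Feasible

variable {X : Type*} [MetricSpace X] {P : Finset X} {s : X} {ρ : X → ℝ} {α : ℝ}

theorem feasible_iff :
    Feasible P s ρ ↔ (∀ p ∈ P, 0 ≤ ρ p) ∧ ∀ p ∈ P, ReflTransGen (Hop P dist ρ) s p := by
  refine and_congr_right fun _ => forall₂_congr fun p hp => ⟨?_, fun h => ?_⟩
  · rintro ⟨m, f, rfl, rfl, hmem, hstep⟩
    refine (reflTransGen_of_succ_of_le (fun i j => Hop P dist ρ (f i) (f j)) (fun i hi => ?_)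
      m.zero_le).lift f fun _ _ => id
    rw [Set.mem_Ico] at hi
    rw [Order.succ_eq_add_one]
    exact ⟨hmem i hi.2.le, hmem (i + 1) hi.2, hstep i hi.2⟩
  · induction h with
    | refl => exact ⟨0, fun _ => s, rfl, rfl, by simpa using hp, by simp⟩
    | @tail b c _ hbc ih =>
      obtain ⟨m, f, h0, hm, hmem, hstep⟩ := ih hbc.1
      refine ⟨m + 1, Function.update f (m + 1) c, by simpa using h0, by simp, fun i hi => ?_,
        fun i hi => ?_⟩
      · rcases hi.lt_or_eq with hi | rfl
        · simpa [Function.update_of_ne (by omega : i ≠ m + 1)] using hmem i (by omega)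
        · simpa using hp
      · rcases (Nat.lt_succ_iff.mp hi).lt_or_eq with hi | rfl
        · simpa [Function.update_of_ne (by omega : i ≠ m + 1),
            Function.update_of_ne (by omega : i + 1 ≠ m + 1)] using hstep i hi
        · simpa [hm] using hbc.2.2

theorem exists_feasible (hs : s ∈ P) : ∃ ρ, Feasible P s ρ :=
  ⟨fun _ => ∑ q ∈ P, dist s q, feasible_iff.2
    ⟨fun _ _ => sum_nonneg fun _ _ => dist_nonneg, fun _ hp => .single
      ⟨hs, hp, single_le_sum (f := dist s) (fun _ _ => dist_nonneg) hp⟩⟩⟩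

theorem opt_le_cost (hρ : Feasible P s ρ) : opt α P s ≤ cost α P ρ :=
  csInf_le ⟨0, by rintro _ ⟨ρ, hρ, rfl⟩; exact cost_nonneg hρ.1⟩ ⟨ρ, hρ, rfl⟩

theorem le_opt {c : ℝ} (hs : s ∈ P) (h : ∀ ρ, Feasible P s ρ → c ≤ cost α P ρ) :
    c ≤ opt α P s :=
  le_csInf (let ⟨ρ, hρ⟩ := exists_feasible hs; ⟨_, ρ, hρ, rfl⟩)
    (by rintro _ ⟨ρ, hρ, rfl⟩; exact h ρ hρ)

theorem Feasible.exists_le_mem_dist (hρ : Feasible P s ρ) :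
    ∃ ρ', Feasible P s ρ' ∧ (∀ p ∈ P, ρ' p ≤ ρ p) ∧
      ∀ p ∈ P, ρ' p ∈ (P ×ˢ P).image fun pq => dist pq.1 pq.2 := by
  have hfar : ∀ p ∈ P, ∃ q ∈ P, dist p q ≤ ρ p ∧
      ∀ q' ∈ P, dist p q' ≤ ρ p → dist p q' ≤ dist p q := by
    intro p hp
    obtain ⟨q, hq, hmax⟩ := (P.filter fun q => dist p q ≤ ρ p).exists_max_image (dist p)
      ⟨p, mem_filter.2 ⟨hp, by simpa using hρ.1 p hp⟩⟩
    rw [mem_filter] at hq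
    exact ⟨q, hq.1, hq.2, fun q' hq' h => hmax q' (mem_filter.2 ⟨hq', h⟩)⟩
  choose! far hfar using hfar
  refine ⟨fun p => dist p (far p), feasible_iff.2 ⟨fun _ _ => dist_nonneg, fun p hp => ?_⟩,
    fun p hp => (hfar p hp).2.1,
    fun p hp => mem_image.2 ⟨(p, far p), mem_product.2 ⟨hp, (hfar p hp).1⟩, rfl⟩⟩
  refine ReflTransGen.mono (fun a b hab => ?_) _ _ ((feasible_iff.1 hρ).2 p hp)
  exact ⟨hab.1, hab.2.1, (hfar a hab.1).2.2 b hab.2.1 hab.2.2⟩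

theorem exists_feasible_cost_eq_opt (hα : 0 ≤ α) (hs : s ∈ P) :
    ∃ ρ, Feasible P s ρ ∧ cost α P ρ = opt α P s := by
  set D := (P ×ˢ P).image fun pq => dist pq.1 pq.2
  set C := {c | ∃ ρ, Feasible P s ρ ∧ (∀ p ∈ P, ρ p ∈ D) ∧ cost α P ρ = c}
  have hC : C.Finite := (finite_setOf_cost P D).subset fun c ⟨ρ, _, hρ⟩ => ⟨ρ, hρ⟩
  have hC₀ : C.Nonempty := by
    obtain ⟨ρ, hρ⟩ := exists_feasible hs
    obtain ⟨ρ', hρ', -, hD⟩ := hρ.exists_le_mem_dist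
    exact ⟨_, ρ', hρ', hD, rfl⟩
  obtain ⟨_, ⟨ρ, hρ, -, rfl⟩, hmin⟩ := C.exists_min_image id hC hC₀
  refine ⟨ρ, hρ, le_antisymm (le_opt hs fun ρ₁ hρ₁ => ?_) (opt_le_cost hρ)⟩
  obtain ⟨ρ', hρ', hle, hD⟩ := hρ₁.exists_le_mem_dist
  exact (hmin _ ⟨ρ', hρ', hD, rfl⟩).trans (cost_mono hα hρ'.1 hle)

end Feasible

section Maps

variable {X Y : Type*} [MetricSpace Y] {P : Finset X} {s : X} {φ : X → Y} {α : ℝ}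

theorem opt_image_le_cost (hφ : Set.InjOn φ P) {ρ : X → ℝ} (hρ : ∀ p ∈ P, 0 ≤ ρ p)
    (hreach : ∀ p ∈ P, ReflTransGen (Hop P (fun a b => dist (φ a) (φ b)) ρ) s p) :
    opt α (P.image φ) (φ s) ≤ cost α P ρ := by
  have : Nonempty X := ⟨s⟩
  set σ := ρ ∘ Function.invFunOn φ P
  have hσ : ∀ p ∈ P, σ (φ p) = ρ p := fun p hp => congrArg ρ (hφ.leftInvOn_invFunOn hp)
  have hfeas : Feasible (P.image φ) (φ s) σ := by
    refine feasible_iff.2 ⟨?_, ?_⟩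
    · simp only [forall_mem_image]
      exact fun p hp => (hσ p hp).symm ▸ hρ p hp
    · simp only [forall_mem_image]
      refine fun p hp => (hreach p hp).lift φ fun a b hab => ?_
      exact ⟨mem_image_of_mem φ hab.1, mem_image_of_mem φ hab.2.1, hσ a hab.1 ▸ hab.2.2⟩
  calc opt α (P.image φ) (φ s) ≤ cost α (P.image φ) σ := opt_le_cost hfeas
    _ = cost α P ρ :=
      (cost_comp hφ σ).symm.trans (sum_congr rfl fun p hp => by rw [Function.comp_apply, hσ p hp])

variable [MetricSpace X]

theorem injOn_of_dist_le_dist (hφ : ∀ p ∈ P, ∀ q ∈ P, dist p q ≤ dist (φ p) (φ q)) :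
    Set.InjOn φ P :=
  fun p hp q hq h => dist_le_zero.1 (by simpa [h] using hφ p hp q hq)

theorem Feasible.comp (hs : s ∈ P) (hφ : ∀ p ∈ P, ∀ q ∈ P, dist p q ≤ dist (φ p) (φ q))
    {σ : Y → ℝ} (hσ : Feasible (P.image φ) (φ s) σ) : Feasible P s (σ ∘ φ) := by
  rw [feasible_iff] at hσ ⊢
  refine ⟨fun p hp => hσ.1 _ (mem_image_of_mem φ hp), fun p hp => ?_⟩
  suffices ∀ y, ReflTransGen (Hop (P.image φ) dist σ) (φ s) y →
      ∀ p ∈ P, φ p = y → ReflTransGen (Hop P dist (σ ∘ φ)) s p from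
    this _ (hσ.2 _ (mem_image_of_mem φ hp)) p hp rfl
  intro y hy
  induction hy with
  | refl => intro p hp h; rw [injOn_of_dist_le_dist hφ hp hs h]
  | tail _ hbc ih =>
    intro p hp hpc
    obtain ⟨q, hq, rfl⟩ := mem_image.1 hbc.1
    exact (ih q hq rfl).tail ⟨hq, hp, (hφ q hq p hp).trans (hpc ▸ hbc.2.2)⟩

theorem opt_le_opt_image (hs : s ∈ P) (hφ : ∀ p ∈ P, ∀ q ∈ P, dist p q ≤ dist (φ p) (φ q)) :
    opt α P s ≤ opt α (P.image φ) (φ s) :=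
  le_opt (mem_image_of_mem φ hs) fun σ hσ =>
    cost_comp (injOn_of_dist_le_dist hφ) σ ▸ opt_le_cost (hσ.comp hs hφ)

theorem opt_eq_opt_image (hs : s ∈ P) (hφ : ∀ p ∈ P, ∀ q ∈ P, dist p q ≤ dist (φ p) (φ q))
    {ρ : X → ℝ} (hρ : Feasible P s ρ) (hopt : cost α P ρ = opt α P s)
    (hreach : ∀ p ∈ P, ReflTransGen (Hop P (fun a b => dist (φ a) (φ b)) ρ) s p) :
    opt α P s = opt α (P.image φ) (φ s) :=
  (opt_le_opt_image hs hφ).antisymm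
    (hopt ▸ opt_image_le_cost (injOn_of_dist_le_dist hφ) hρ.1 hreach)

end Maps

namespace AddCircle

variable {c : ℝ}

theorem norm_coe_le_abs (x : ℝ) : ‖(x : AddCircle c)‖ ≤ |x| :=
  QuotientAddGroup.norm_mk_le_norm

theorem exists_coe_eq_abs_eq_norm (z : AddCircle c) :
    ∃ x : ℝ, (x : AddCircle c) = z ∧ |x| = ‖z‖ := by
  obtain ⟨y, rfl⟩ := QuotientAddGroup.mk_surjective z
  refine ⟨y - round (c⁻¹ * y) * c, ?_, (norm_eq c).symm⟩
  rw [coe_sub, sub_eq_self, coe_eq_zero_iff]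
  exact ⟨round (c⁻¹ * y), zsmul_eq_mul _ _⟩

structure IsUnfolding (T : Finset (AddCircle c)) (s : AddCircle c) (ρ φ : AddCircle c → ℝ) :
    Prop where
  source_mem : s ∈ T
  map_source : φ s = 0
  coe_map : ∀ p ∈ T, (φ p : AddCircle c) = p - s
  reach : ∀ p ∈ T, ReflTransGen (Hop T (fun a b => dist (φ a) (φ b)) ρ) s p

variable {T : Finset (AddCircle c)} {s p q : AddCircle c} {ρ φ : AddCircle c → ℝ}

theorem isUnfolding_singleton : IsUnfolding {s} s ρ 0 where
  source_mem := mem_singleton_self s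
  map_source := rfl
  coe_map p hp := by rw [mem_singleton.1 hp, sub_self]; rfl
  reach p hp := mem_singleton.1 hp ▸ .refl

theorem IsUnfolding.dist_le (h : IsUnfolding T s ρ φ) (hp : p ∈ T) (hq : q ∈ T) :
    dist p q ≤ dist (φ p) (φ q) :=
  calc dist p q = ‖(p - s) - (q - s)‖ := by rw [dist_eq_norm, sub_sub_sub_cancel_right]
    _ = ‖((φ p - φ q : ℝ) : AddCircle c)‖ := by rw [coe_sub, h.coe_map p hp, h.coe_map q hq]
    _ ≤ dist (φ p) (φ q) := norm_coe_le_abs _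

theorem IsUnfolding.exists_insert (h : IsUnfolding T s ρ φ) (hq : q ∈ T) (hp : p ∉ T)
    (hqp : dist q p ≤ ρ q) : ∃ φ', IsUnfolding (insert p T) s ρ φ' := by
  obtain ⟨x, hx, hxq⟩ := exists_coe_eq_abs_eq_norm (p - q)
  have hne : ∀ a ∈ T, a ≠ p := fun a ha hap => hp (hap ▸ ha)
  set φ' := Function.update φ p (φ q + x)
  have hφ'p : φ' p = φ q + x := Function.update_self ..
  have hφ' : ∀ a ∈ T, φ' a = φ a := fun a ha => Function.update_of_ne (hne a ha) _ _
  have hmono : ∀ a ∈ T, ReflTransGen (Hop (insert p T) (fun a b => dist (φ' a) (φ' b)) ρ) s a :=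
    fun a ha => ReflTransGen.mono (fun a b hab => ⟨mem_insert_of_mem hab.1,
      mem_insert_of_mem hab.2.1, by simpa only [hφ' a hab.1, hφ' b hab.2.1] using hab.2.2⟩) _ _
      (h.reach a ha)
  refine ⟨φ', mem_insert_of_mem h.source_mem, (hφ' s h.source_mem).trans h.map_source,
    fun a ha => ?_, fun a ha => ?_⟩
  · rcases mem_insert.1 ha with rfl | ha
    · rw [hφ'p, coe_add, h.coe_map q hq, hx, sub_add_sub_cancel']
    · rw [hφ' a ha, h.coe_map a ha]
  · rcases mem_insert.1 ha with hap | ha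
    · rw [hap]
      refine (hmono q hq).tail ⟨mem_insert_of_mem hq, mem_insert_self _ _, ?_⟩
      change dist (φ' q) (φ' p) ≤ ρ q
      rw [hφ' q hq, hφ'p, Real.dist_eq, sub_add_cancel_left, abs_neg, hxq,
        ← dist_eq_norm, dist_comm]
      exact hqp
    · exact hmono a ha

/-- A maximal unfolded subset of `P` is all of `P`: a hop of `ρ` leaving it would extend it. -/
theorem exists_isUnfolding {P : Finset (AddCircle c)} (hs : s ∈ P) (hρ : Feasible P s ρ) :
    ∃ φ, IsUnfolding P s ρ φ := by
  obtain ⟨T, hT, hmax⟩ := (P.powerset.filter fun T => ∃ φ, IsUnfolding T s ρ φ).exists_max_image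
    card ⟨{s}, mem_filter.2 ⟨mem_powerset.2 (singleton_subset_iff.2 hs), 0, isUnfolding_singleton⟩⟩
  obtain ⟨hTP, φ, hφ⟩ := mem_filter.1 hT
  obtain rfl : T = P := (mem_powerset.1 hTP).antisymm fun p hp => by_contra fun hpT => by
    obtain ⟨q, hq, p', hp', hqp'⟩ := ((feasible_iff.1 hρ).2 p hp).exists_rel_of_mem_of_not_mem
      (S := T) hφ.source_mem hpT
    obtain ⟨φ', hφ'⟩ := hφ.exists_insert hq hp' hqp'.2.2
    have := hmax (insert p' T) (mem_filter.2
      ⟨mem_powerset.2 (insert_subset hqp'.2.1 (mem_powerset.1 hTP)), φ', hφ'⟩)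
    rw [card_insert_of_notMem hp'] at this
    omega
  exact ⟨φ, hφ⟩

end AddCircle

/-- An optimal broadcast range assignment on the circle `S¹ = ℝ/ℤ` of
circumference 1 can be obtained by cutting the circle at an appropriate point: there is a map
`φ : P → ℝ` with `φ s = 0` that does not decrease distances and preserves the optimal cost. -/
theorem cut_circle_optimal (α : ℝ) (hα : 1 < α)
    (P : Finset (AddCircle (1:ℝ))) (s : AddCircle (1:ℝ)) (hs : s ∈ P) :
    ∃ φ : AddCircle (1:ℝ) → ℝ, φ s = 0 ∧
      (∀ p ∈ P, ∀ q ∈ P, dist p q ≤ |φ p - φ q|) ∧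
      opt α P s = opt α (P.image φ) 0 := by
  obtain ⟨ρ, hρ, hopt⟩ := exists_feasible_cost_eq_opt (zero_le_one.trans hα.le) hs
  obtain ⟨φ, hφ⟩ := AddCircle.exists_isUnfolding hs hρ
  have hexp : ∀ p ∈ P, ∀ q ∈ P, dist p q ≤ dist (φ p) (φ q) := fun p hp q hq => hφ.dist_le hp hq
  refine ⟨φ, hφ.map_source, hexp, ?_⟩
  simpa only [hφ.map_source] using opt_eq_opt_image hs hexp hρ hopt hφ.reach
end

section
/- There exists a function F assigning to every finite set P ⊂ ℝ with 0 ∈ P a feasible range assignment F(P) for P (with source 0) such that: (i) cost_2(F(P)) ≤ 1.97·opt_2(P) for every such P, and (ii) for every such P and every q ∈ ℝ ∖ P, the number of points p ∈ P ∪ {q} with F(P∪{q})(p) ≠ F(P)(p) is at most 3, where F(P) is extended by F(P)(q) = 0. (This expresses the existence of a 3-stable 1.97-approximation algorithm for the dynamic broadcast range-assignment problem in ℝ¹ for distance-power gradient α = 2.) -/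
open Finset

attribute [local instance] Classical.propDecidable

/-!
On each side of the source, a point `p ≠ 0` bridges the gap to its outer neighbour `t` with
range `|t - p|`, unless the gap is *long* (`50 |p| < |t|`); the source reaches the farthest
endpoint of a long gap. Inserting `q` changes the ranges of `q`, of the source and of the
neighbour of `q` on the source side only.

For the ratio, fix a feasible `ρ`. A path from the source to `t` jumps across the gap `(p, t)`,
so the gap can be charged to a point `w ≤ p` with `t ≤ w + ρ w`, and the gaps charged to `w`
are disjoint subintervals of `[w, w + ρ w]`. Hence their squared lengths sum to at most
`ρ(w)²`, and since a short gap satisfies `(t - p)² ≤ (49/51) (t² - p²)`, telescoping bounds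
the cost of the gaps charged to `w` on the other side of `0` by `(49/51) ρ(w)²`. This gives
`100/51 ρ(w)²` per point. The squared range of the source is charged to the witness of its
long gap; as that gap is long, the witness is close to `0`, and the slack up to `1.97` absorbs it.
-/

open scoped Pointwise

namespace BroadcastR1

section Reachability

variable {X : Type*} [MetricSpace X] {P : Finset X} {s p q : X} {ρ : X → ℝ}

def Reaches (P : Finset X) (s : X) (ρ : X → ℝ) (p : X) : Prop :=
  ∃ (m : ℕ) (f : ℕ → X), f 0 = s ∧ f m = p ∧ (∀ i ≤ m, f i ∈ P) ∧
    ∀ i < m, dist (f i) (f (i + 1)) ≤ ρ (f i)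

theorem reaches_self (hs : s ∈ P) : Reaches P s ρ s :=
  ⟨0, fun _ => s, rfl, rfl, fun _ _ => hs, fun _ h => absurd h (Nat.not_lt_zero _)⟩

theorem Reaches.step (h : Reaches P s ρ p) (hq : q ∈ P) (hpq : dist p q ≤ ρ p) :
    Reaches P s ρ q := by
  obtain ⟨m, f, hf0, hfm, hfP, hfd⟩ := h
  refine ⟨m + 1, fun i => if i ≤ m then f i else q, by simp [hf0], by simp, ?_, ?_⟩
  · intro i _
    dsimp only
    split_ifs with hi
    exacts [hfP i hi, hq]
  · intro i hi
    rcases Nat.lt_succ_iff_lt_or_eq.1 hi with hi | rfl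
    · simpa [hi.le, Nat.succ_le_of_lt hi] using hfd i hi
    · simpa [hfm] using hpq

end Reachability

theorem Reaches.neg {P : Finset ℝ} {s p : ℝ} {ρ : ℝ → ℝ} (h : Reaches P s ρ p) :
    Reaches (-P) (-s) (fun x => ρ (-x)) (-p) := by
  obtain ⟨m, f, hf0, hfm, hfP, hfd⟩ := h
  exact ⟨m, fun i => -f i, by simp [hf0], by simp [hfm],
    fun i hi => by simpa [Finset.mem_neg'] using hfP i hi,
    fun i hi => by simpa [dist_neg_neg] using hfd i hi⟩

theorem _root_.Feasible.neg {P : Finset ℝ} {s : ℝ} {ρ : ℝ → ℝ} (h : Feasible P s ρ) :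
    Feasible (-P) (-s) (fun x => ρ (-x)) :=
  ⟨fun p hp => h.1 (-p) (Finset.mem_neg'.1 hp),
    fun p hp => neg_neg p ▸ Reaches.neg (h.2 (-p) (Finset.mem_neg'.1 hp))⟩

theorem exists_le_lt_succ_of_le_of_lt {α : Type*} [LinearOrder α] {f : ℕ → α} {a : α} {m : ℕ}
    (h0 : f 0 ≤ a) (hm : a < f m) : ∃ i < m, f i ≤ a ∧ a < f (i + 1) := by
  induction m with
  | zero => exact absurd h0 hm.not_ge
  | succ m ih =>
    by_cases h : a < f m
    · obtain ⟨i, hi, hfi⟩ := ih h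
      exact ⟨i, by omega, hfi⟩
    · exact ⟨m, by omega, not_lt.1 h, hm⟩

theorem Reaches.exists_jump {P : Finset ℝ} {s a t : ℝ} {ρ : ℝ → ℝ} (h : Reaches P s ρ t)
    (hs : s ≤ a) (ht : a < t) : ∃ w ∈ P, ∃ x ∈ P, w ≤ a ∧ a < x ∧ x - w ≤ ρ w := by
  obtain ⟨m, f, rfl, rfl, hfP, hfd⟩ := h
  obtain ⟨i, hi, hfi, hfi'⟩ := exists_le_lt_succ_of_le_of_lt hs ht
  refine ⟨f i, hfP i hi.le, f (i + 1), hfP (i + 1) hi, hfi, hfi', ?_⟩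
  have hd := hfd i hi
  rw [Real.dist_eq, abs_sub_comm] at hd
  exact (le_abs_self _).trans hd

section Neighbours

variable {P : Finset ℝ} {p q t x y : ℝ}

/-- The least point of `P` above `x`, and `x` itself if there is none (so the gap
`(x, nextAbove P x)` is then empty). -/
noncomputable def nextAbove (P : Finset ℝ) (x : ℝ) : ℝ :=
  if h : (P.filter (x < ·)).Nonempty then (P.filter (x < ·)).min' h else x

/-- The greatest point of `P` below `x`, and `x` itself if there is none. -/
noncomputable def prevBelow (P : Finset ℝ) (x : ℝ) : ℝ :=
  if h : (P.filter (· < x)).Nonempty then (P.filter (· < x)).max' h else x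

theorem nextAbove_le (ht : t ∈ P) (hxt : x < t) : nextAbove P x ≤ t := by
  have h : (P.filter (x < ·)).Nonempty := ⟨t, mem_filter.2 ⟨ht, hxt⟩⟩
  rw [nextAbove, dif_pos h]
  exact min'_le _ _ (mem_filter.2 ⟨ht, hxt⟩)

theorem nextAbove_mem_and_lt (h : ∃ t ∈ P, x < t) : nextAbove P x ∈ P ∧ x < nextAbove P x := by
  have h : (P.filter (x < ·)).Nonempty := by simpa [Finset.Nonempty] using h
  rw [nextAbove, dif_pos h]
  exact mem_filter.1 (min'_mem _ h)

theorem nextAbove_of_forall_le (h : ∀ t ∈ P, t ≤ x) : nextAbove P x = x := by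
  have h : ¬(P.filter (x < ·)).Nonempty := by simpa [Finset.Nonempty] using h
  rw [nextAbove, dif_neg h]

theorem le_nextAbove (P : Finset ℝ) (x : ℝ) : x ≤ nextAbove P x := by
  by_cases h : ∃ t ∈ P, x < t
  · exact (nextAbove_mem_and_lt h).2.le
  · push Not at h
    exact (nextAbove_of_forall_le h).ge

theorem nextAbove_eq (ht : t ∈ P) (hxt : x < t) (hmin : ∀ y ∈ P, x < y → t ≤ y) :
    nextAbove P x = t := by
  obtain ⟨hmem, hlt⟩ := nextAbove_mem_and_lt ⟨t, ht, hxt⟩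
  exact (nextAbove_le ht hxt).antisymm (hmin _ hmem hlt)

theorem prevBelow_mem_and_lt (h : ∃ y ∈ P, y < x) : prevBelow P x ∈ P ∧ prevBelow P x < x := by
  have h : (P.filter (· < x)).Nonempty := by simpa [Finset.Nonempty] using h
  rw [prevBelow, dif_pos h]
  exact mem_filter.1 (max'_mem _ h)

theorem le_prevBelow (hy : y ∈ P) (hyx : y < x) : y ≤ prevBelow P x := by
  have h : (P.filter (· < x)).Nonempty := ⟨y, mem_filter.2 ⟨hy, hyx⟩⟩
  rw [prevBelow, dif_pos h]
  exact le_max' _ _ (mem_filter.2 ⟨hy, hyx⟩)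

theorem prevBelow_le (P : Finset ℝ) (x : ℝ) : prevBelow P x ≤ x := by
  by_cases h : ∃ y ∈ P, y < x
  · exact (prevBelow_mem_and_lt h).2.le
  · have h : ¬(P.filter (· < x)).Nonempty := by simpa [Finset.Nonempty] using h
    rw [prevBelow, dif_neg h]

theorem nextAbove_prevBelow (ht : t ∈ P) (h : ∃ y ∈ P, y < t) :
    nextAbove P (prevBelow P t) = t :=
  nextAbove_eq ht (prevBelow_mem_and_lt h).2 fun _ hy hby =>
    not_lt.1 fun hyt => (le_prevBelow hy hyt).not_gt hby

theorem nextAbove_insert_of_ne_prevBelow (hp : p ∈ P) (hpq : p ≠ prevBelow P q) :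
    nextAbove (insert q P) p = nextAbove P p := by
  rcases le_or_gt q p with hqp | hpq'
  · rw [nextAbove, nextAbove, filter_insert, if_neg hqp.not_gt]
  · obtain ⟨hbP, hbq⟩ := prevBelow_mem_and_lt ⟨p, hp, hpq'⟩
    have hpb : p < prevBelow P q := (le_prevBelow hp hpq').lt_of_ne hpq
    obtain ⟨hnP, hpn⟩ := nextAbove_mem_and_lt ⟨_, hbP, hpb⟩
    refine nextAbove_eq (mem_insert_of_mem hnP) hpn fun y hy hpy => ?_
    rcases mem_insert.1 hy with rfl | hy
    · exact (nextAbove_le hbP hpb).trans hbq.le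
    · exact nextAbove_le hy hpy

end Neighbours

section Assignment

variable {P : Finset ℝ} {p q : ℝ}

noncomputable def hop (P : Finset ℝ) (p : ℝ) : ℝ :=
  if 50 * p < nextAbove P p then 0 else nextAbove P p - p

noncomputable def sourceRange (P : Finset ℝ) : ℝ :=
  (insert 0 P).sup' (insert_nonempty 0 P) fun p =>
    if 0 ≤ p ∧ 50 * p < nextAbove P p then nextAbove P p else 0

noncomputable def stableAssignment (P : Finset ℝ) (p : ℝ) : ℝ :=
  if 0 < p then hop P p
  else if p < 0 then hop (-P) (-p)
  else max (sourceRange P) (sourceRange (-P))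

theorem hop_nonneg (P : Finset ℝ) (p : ℝ) : 0 ≤ hop P p := by
  unfold hop
  split_ifs
  · exact le_rfl
  · linarith [le_nextAbove P p]

theorem hop_le (P : Finset ℝ) (p : ℝ) : hop P p ≤ nextAbove P p - p := by
  unfold hop
  split_ifs
  · linarith [le_nextAbove P p]
  · exact le_rfl

theorem hop_of_lt (h : 50 * p < nextAbove P p) : hop P p = 0 := if_pos h

theorem hop_zero (P : Finset ℝ) : hop P 0 = 0 := by
  unfold hop
  split_ifs with h
  · rfl
  · linarith [le_nextAbove P 0]

theorem hop_sq_le (hp : 0 ≤ p) : hop P p ^ 2 ≤ 49 / 51 * (nextAbove P p ^ 2 - p ^ 2) := by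
  have hpn := le_nextAbove P p
  unfold hop
  split_ifs <;> nlinarith

theorem nextAbove_le_sourceRange (hp : p ∈ P) (hp0 : 0 ≤ p) (hlong : 50 * p < nextAbove P p) :
    nextAbove P p ≤ sourceRange P := by
  refine le_trans ?_ (le_sup' _ (mem_insert_of_mem hp))
  rw [if_pos ⟨hp0, hlong⟩]

theorem sourceRange_nonneg (P : Finset ℝ) : 0 ≤ sourceRange P := by
  refine le_trans ?_ (le_sup' _ (mem_insert_self 0 P))
  split_ifs with h
  exacts [by linarith [h.2], le_rfl]

theorem sourceRange_eq_zero_or_exists (h0 : 0 ∈ P) :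
    sourceRange P = 0 ∨
      ∃ p ∈ P, 0 ≤ p ∧ 50 * p < nextAbove P p ∧ sourceRange P = nextAbove P p := by
  obtain ⟨p, hp, hsup⟩ := exists_mem_eq_sup' (insert_nonempty 0 P)
    fun p => if 0 ≤ p ∧ 50 * p < nextAbove P p then nextAbove P p else 0
  rw [insert_eq_of_mem h0] at hp
  rw [← sourceRange] at hsup
  split_ifs at hsup with h
  exacts [Or.inr ⟨p, hp, h.1, h.2, hsup⟩, Or.inl hsup]

theorem stableAssignment_of_pos (hp : 0 < p) : stableAssignment P p = hop P p := if_pos hp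

theorem stableAssignment_of_neg (hp : p < 0) : stableAssignment P p = hop (-P) (-p) := by
  rw [stableAssignment, if_neg hp.not_gt, if_pos hp]

theorem stableAssignment_zero (P : Finset ℝ) :
    stableAssignment P 0 = max (sourceRange P) (sourceRange (-P)) := by
  simp [stableAssignment]

theorem stableAssignment_neg (P : Finset ℝ) (x : ℝ) :
    stableAssignment (-P) x = stableAssignment P (-x) := by
  rcases lt_trichotomy x 0 with hx | rfl | hx
  · rw [stableAssignment_of_neg hx, stableAssignment_of_pos (neg_pos.2 hx), neg_neg]
  · rw [neg_zero, stableAssignment_zero, stableAssignment_zero, neg_neg, max_comm]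
  · rw [stableAssignment_of_pos hx, stableAssignment_of_neg (neg_lt_zero.2 hx), neg_neg]

end Assignment

section Feasibility

variable {P : Finset ℝ}

theorem reaches_of_nonneg (h0 : 0 ∈ P) {ρ : ℝ → ℝ} (hsrc : sourceRange P ≤ ρ 0)
    (hhop : ∀ p ∈ P, 0 < p → hop P p ≤ ρ p) {t : ℝ} (ht : t ∈ P) (ht0 : 0 ≤ t) :
    Reaches P 0 ρ t := by
  revert ht0
  refine (P.wellFoundedOn (r := (· < ·))).induction (P := fun t => 0 ≤ t → Reaches P 0 ρ t) ht
    fun t ht ih ht0 => ?_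
  rcases ht0.eq_or_lt with rfl | ht0
  · exact reaches_self h0
  have hbelow : ∃ y ∈ P, y < t := ⟨0, h0, ht0⟩
  obtain ⟨hbP, hbt⟩ := prevBelow_mem_and_lt hbelow
  have hb0 : 0 ≤ prevBelow P t := le_prevBelow h0 ht0
  have hnext : nextAbove P (prevBelow P t) = t := nextAbove_prevBelow ht hbelow
  by_cases hlong : 50 * prevBelow P t < t
  · refine (reaches_self h0).step ht ?_
    rw [Real.dist_eq, zero_sub, abs_neg, abs_of_pos ht0]
    calc t = nextAbove P (prevBelow P t) := hnext.symm
      _ ≤ sourceRange P := nextAbove_le_sourceRange hbP hb0 (by rwa [hnext])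
      _ ≤ ρ 0 := hsrc
  · have hb : 0 < prevBelow P t := hb0.lt_of_ne fun h => hlong (by rw [← h]; linarith)
    have hhopb := hhop _ hbP hb
    rw [hop, hnext, if_neg hlong] at hhopb
    refine (ih _ hbP hbt hb0).step ht ?_
    rwa [Real.dist_eq, abs_sub_comm, abs_of_pos (sub_pos.2 hbt)]

theorem reaches_stableAssignment_of_nonneg (h0 : 0 ∈ P) {t : ℝ} (ht : t ∈ P) (ht0 : 0 ≤ t) :
    Reaches P 0 (stableAssignment P) t :=
  reaches_of_nonneg h0 (stableAssignment_zero P ▸ le_max_left _ _)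
    (fun _ _ hp => (stableAssignment_of_pos hp).ge) ht ht0

theorem feasible_stableAssignment (h0 : 0 ∈ P) : Feasible P 0 (stableAssignment P) := by
  refine ⟨fun p _ => ?_, fun p hp => show Reaches P 0 _ p from ?_⟩
  · rcases lt_trichotomy p 0 with hp0 | rfl | hp0
    · exact (stableAssignment_of_neg hp0).ge.trans' (hop_nonneg _ _)
    · exact (stableAssignment_zero P).ge.trans' (le_max_of_le_left (sourceRange_nonneg P))
    · exact (stableAssignment_of_pos hp0).ge.trans' (hop_nonneg _ _)
  · rcases le_or_gt 0 p with hp0 | hp0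
    · exact reaches_stableAssignment_of_nonneg h0 hp hp0
    · have h := (reaches_stableAssignment_of_nonneg (P := -P) (by simpa using h0)
        (mem_neg'.2 (by simpa using hp)) (neg_nonneg.2 hp0.le)).neg
      simpa [stableAssignment_neg] using h

end Feasibility

section Stability

variable {P : Finset ℝ} {p q : ℝ}

theorem eq_prevBelow_of_stableAssignment_insert_ne (hp : p ∈ P) (hp0 : 0 < p)
    (hne : stableAssignment (insert q P) p ≠ stableAssignment P p) : p = prevBelow P q := by
  by_contra hpq
  rw [stableAssignment_of_pos hp0, stableAssignment_of_pos hp0, hop, hop,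
    nextAbove_insert_of_ne_prevBelow hp hpq] at hne
  exact hne rfl

theorem neg_eq_prevBelow_of_stableAssignment_insert_ne (hp : p ∈ P) (hp0 : p < 0)
    (hne : stableAssignment (insert q P) p ≠ stableAssignment P p) :
    -p = prevBelow (-P) (-q) := by
  refine eq_prevBelow_of_stableAssignment_insert_ne (mem_neg'.2 (by simpa using hp))
    (neg_pos.2 hp0) ?_
  rwa [← neg_insert, stableAssignment_neg, stableAssignment_neg, neg_neg]

theorem changed_subset (P : Finset ℝ) (q : ℝ) :
    {p ∈ insert q (P : Set ℝ) |
        stableAssignment (insert q P) p ≠ Function.update (stableAssignment P) q 0 p} ⊆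
      {0, q, if 0 < q then prevBelow P q else -prevBelow (-P) (-q)} := by
  rintro p ⟨hp, hne⟩
  by_cases hpq : p = q
  · simp [hpq]
  have hpP : p ∈ P := by simpa [hpq] using hp
  rw [Function.update_of_ne hpq] at hne
  rcases lt_trichotomy p 0 with hp0 | rfl | hp0
  · have h := neg_eq_prevBelow_of_stableAssignment_insert_ne hpP hp0 hne
    have hq : ¬0 < q := by linarith [prevBelow_le (-P) (-q)]
    simp [hq, ← h]
  · simp
  · have h := eq_prevBelow_of_stableAssignment_insert_ne hpP hp0 hne
    have hq : 0 < q := by linarith [prevBelow_le P q]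
    simp [hq, ← h]

theorem ncard_changed_le_three (P : Finset ℝ) (q : ℝ) :
    {p ∈ insert q (P : Set ℝ) |
        stableAssignment (insert q P) p ≠ Function.update (stableAssignment P) q 0 p}.ncard ≤ 3 :=
  (Set.ncard_le_ncard (changed_subset P q)).trans <|
    (Set.ncard_insert_le _ _).trans <| Nat.add_le_add_right
      ((Set.ncard_insert_le _ _).trans (by simp)) 1

end Stability

section GapWitness

def IsGapWitness (P : Finset ℝ) (ρ W : ℝ → ℝ) : Prop :=
  ∀ p ∈ P, 0 ≤ p → W p ∈ P ∧ W p ≤ p ∧ nextAbove P p ≤ W p + ρ (W p)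

variable {P : Finset ℝ} {ρ W : ℝ → ℝ} {w : ℝ}

theorem _root_.Feasible.exists_isGapWitness (hF : Feasible P 0 ρ) : ∃ W, IsGapWitness P ρ W := by
  have key : ∀ p ∈ P, 0 ≤ p → ∃ w ∈ P, w ≤ p ∧ nextAbove P p ≤ w + ρ w := by
    intro p hp hp0
    by_cases h : ∃ t ∈ P, p < t
    · obtain ⟨t, ht, hpt⟩ := h
      obtain ⟨w, hw, x, hx, hwp, hpx, hxw⟩ := Reaches.exists_jump (hF.2 t ht) hp0 hpt
      exact ⟨w, hw, hwp, by linarith [nextAbove_le hx hpx]⟩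
    · push Not at h
      exact ⟨p, hp, le_rfl, by linarith [nextAbove_of_forall_le h, hF.1 p hp]⟩
  choose! W hW using key
  exact ⟨W, hW⟩

theorem sum_sub_le_of_disjoint {g : ℝ → ℝ} {V U : ℝ} (hVU : V ≤ U)
    (hg : MonotoneOn g (Set.Icc V U)) {S : Finset ℝ} {b : ℝ → ℝ}
    (hS : ∀ p ∈ S, V ≤ p ∧ p ≤ b p ∧ b p ≤ U) (hdisj : ∀ p ∈ S, ∀ p' ∈ S, p < p' → b p ≤ p') :
    ∑ p ∈ S, (g (b p) - g p) ≤ g U - g V := by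
  induction S using Finset.induction_on_max generalizing U with
  | empty => simpa using hg ⟨le_rfl, hVU⟩ ⟨hVU, le_rfl⟩ hVU
  | insert a s hlt ih =>
    obtain ⟨hVa, hab, hbU⟩ := hS a (mem_insert_self a s)
    have hs : ∑ p ∈ s, (g (b p) - g p) ≤ g a - g V := by
      refine ih hVa (hg.mono (Set.Icc_subset_Icc_right (hab.trans hbU))) (fun p hp => ?_)
        fun p hp p' hp' => hdisj p (mem_insert_of_mem hp) p' (mem_insert_of_mem hp')
      obtain ⟨hVp, hpb, -⟩ := hS p (mem_insert_of_mem hp)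
      exact ⟨hVp, hpb, hdisj p (mem_insert_of_mem hp) a (mem_insert_self a s) (hlt p hp)⟩
    rw [sum_insert fun h => (hlt a h).false]
    linarith [hg ⟨hVa.trans hab, hbU⟩ ⟨hVU, le_rfl⟩ hbU]

theorem IsGapWitness.sum_fiberwise (hW : IsGapWitness P ρ W) (f : ℝ → ℝ) :
    ∑ w ∈ P, ∑ p ∈ P with 0 ≤ p ∧ W p = w, f p = ∑ p ∈ P with 0 ≤ p, f p := by
  rw [← sum_fiberwise_of_maps_to (g := W) fun p hp => (hW p (mem_filter.1 hp).1
    (mem_filter.1 hp).2).1]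
  simp_rw [filter_filter]

variable (hW : IsGapWitness P ρ W) (hw : 0 ≤ ρ w)
include hW hw

theorem IsGapWitness.sum_sub_le {g : ℝ → ℝ} (hg : MonotoneOn g (Set.Ici 0)) :
    ∑ p ∈ P with 0 ≤ p ∧ W p = w, (g (nextAbove P p) - g p) ≤
      g (max (w + ρ w) 0) - g (max w 0) := by
  refine sum_sub_le_of_disjoint (max_le_max_right 0 (by linarith))
    (hg.mono fun x hx => le_trans (le_max_right w 0) hx.1) (fun p hp => ?_)
    fun p hp p' hp' hpp' => nextAbove_le (mem_filter.1 hp').1 hpp'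
  obtain ⟨hpP, hp0, rfl⟩ := mem_filter.1 hp
  obtain ⟨-, hWp, hreach⟩ := hW p hpP hp0
  exact ⟨max_le hWp hp0, le_nextAbove P p, hreach.trans (le_max_left _ _)⟩

theorem IsGapWitness.sum_hop_sq_le_sq :
    ∑ p ∈ P with 0 ≤ p ∧ W p = w, hop P p ^ 2 ≤ ρ w ^ 2 := by
  have hlen := hW.sum_sub_le hw (g := id) monotoneOn_id
  have hU : max (w + ρ w) 0 - max w 0 ≤ ρ w :=
    sub_le_iff_le_add.2 (max_le (by linarith [le_max_left w 0]) (by positivity))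
  calc ∑ p ∈ P with 0 ≤ p ∧ W p = w, hop P p ^ 2
      ≤ (∑ p ∈ P with 0 ≤ p ∧ W p = w, hop P p) ^ 2 :=
        sum_sq_le_sq_sum_of_nonneg fun p _ => hop_nonneg P p
    _ ≤ ρ w ^ 2 := pow_le_pow_left₀ (sum_nonneg fun p _ => hop_nonneg P p)
        ((sum_le_sum fun p _ => hop_le P p).trans (hlen.trans hU)) 2

theorem IsGapWitness.sum_hop_sq_add_le :
    ∑ p ∈ P with 0 ≤ p ∧ W p = w, hop P p ^ 2 +
        49 / 51 * ∑ p ∈ P with (0 ≤ p ∧ W p = w) ∧ 50 * p < nextAbove P p,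
          (nextAbove P p ^ 2 - p ^ 2) ≤
      49 / 51 * (max (w + ρ w) 0 ^ 2 - max w 0 ^ 2) := by
  have hsq := hW.sum_sub_le hw (g := (· ^ 2)) fun x hx y _ hxy => pow_le_pow_left₀ hx hxy 2
  rw [← filter_filter (fun p => 0 ≤ p ∧ W p = w), sum_filter (fun p => 50 * p < nextAbove P p),
    mul_sum, ← sum_add_distrib]
  refine (sum_le_sum fun p hp => ?_).trans (by rw [← mul_sum]; gcongr)
  have hp0 := (mem_filter.1 hp).2.1
  split_ifs with hlong
  · rw [hop_of_lt hlong]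
    simp
  · simpa using hop_sq_le hp0

theorem IsGapWitness.sum_hop_sq_le :
    ∑ p ∈ P with 0 ≤ p ∧ W p = w, hop P p ^ 2 ≤
      49 / 51 * (max (w + ρ w) 0 ^ 2 - max w 0 ^ 2) := by
  refine le_trans ?_ (hW.sum_hop_sq_add_le hw)
  have : 0 ≤ ∑ p ∈ P with (0 ≤ p ∧ W p = w) ∧ 50 * p < nextAbove P p,
      (nextAbove P p ^ 2 - p ^ 2) := sum_nonneg fun p hp => by
    have hp0 := (mem_filter.1 hp).2.1.1
    nlinarith [le_nextAbove P p]
  linarith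

theorem IsGapWitness.sum_hop_sq_le_of_nonpos (hw0 : w ≤ 0) :
    ∑ p ∈ P with 0 ≤ p ∧ W p = w, hop P p ^ 2 ≤ 49 / 51 * ρ w ^ 2 := by
  refine (hW.sum_hop_sq_le hw).trans ?_
  rw [max_eq_right hw0]
  gcongr
  nlinarith [le_max_right (w + ρ w) 0, max_le (by linarith : w + ρ w ≤ ρ w) hw]

end GapWitness

theorem sq_add_add_le_of_long_gap {r w b T R L : ℝ} (hr : 0 ≤ r) (hb : 0 ≤ b) (hwb : w ≤ b)
    (hbT : 50 * b < T) (hTw : T ≤ w + r)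
    (hR : R + 49 / 51 * (T ^ 2 - b ^ 2) ≤ 49 / 51 * (max (w + r) 0 ^ 2 - max w 0 ^ 2))
    (hL : L ≤ r ^ 2) (hL' : L ≤ 49 / 51 * (max (-w + r) 0 ^ 2 - max (-w) 0 ^ 2)) :
    T ^ 2 + R + L ≤ 197 / 100 * r ^ 2 := by
  rw [max_eq_left (by linarith : 0 ≤ w + r)] at hR
  rw [max_eq_left (by linarith : 0 ≤ -w + r)] at hL'
  have hT := mul_nonneg (by linarith : (0:ℝ) ≤ w + r - T) (by linarith : (0:ℝ) ≤ w + r + T)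
  have hb := mul_nonneg (by linarith : (0:ℝ) ≤ T - 50 * b) (by linarith : (0:ℝ) ≤ T + 50 * b)
  rcases le_total 0 w with hw | hw
  · rw [max_eq_left hw] at hR
    rw [max_eq_right (by linarith : -w ≤ 0)] at hL'
    nlinarith [mul_nonneg (by linarith : (0:ℝ) ≤ r - 49 * w) hw,
      mul_nonneg (by linarith : (0:ℝ) ≤ r - 49 * w) hr]
  · rw [max_eq_right hw] at hR
    rw [max_eq_left (by linarith : 0 ≤ -w)] at hL'
    rcases le_total (-49 * w) r with hv | hv
    · nlinarith [mul_nonneg (by linarith : (0:ℝ) ≤ r + 49 * w) (by linarith : (0:ℝ) ≤ -w),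
        mul_nonneg (by linarith : (0:ℝ) ≤ r + 49 * w) hr]
    · nlinarith [mul_nonneg (by linarith : (0:ℝ) ≤ -49 * w - r) (by linarith : (0:ℝ) ≤ w + r)]

section Charge

variable {P : Finset ℝ} {ρ W W' : ℝ → ℝ} {w : ℝ}
variable (hW : IsGapWitness P ρ W) (hW' : IsGapWitness (-P) (fun x => ρ (-x)) W')
  (hw : 0 ≤ ρ w)
include hW hW' hw

theorem IsGapWitness.charge_le :
    ∑ p ∈ P with 0 ≤ p ∧ W p = w, hop P p ^ 2 +
        ∑ p ∈ -P with 0 ≤ p ∧ W' p = -w, hop (-P) p ^ 2 ≤ 197 / 100 * ρ w ^ 2 := by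
  have hw' : 0 ≤ (fun x => ρ (-x)) (-w) := by simpa using hw
  have hR := hW.sum_hop_sq_le_sq hw
  have hL := hW'.sum_hop_sq_le_sq hw'
  simp only [neg_neg] at hL
  rcases le_total w 0 with hw0 | hw0
  · have hR' := hW.sum_hop_sq_le_of_nonpos hw hw0
    nlinarith
  · have hL' := hW'.sum_hop_sq_le_of_nonpos hw' (neg_nonpos.2 hw0)
    simp only [neg_neg] at hL'
    nlinarith

theorem IsGapWitness.sq_add_charge_le {b : ℝ} (hb : b ∈ P) (hb0 : 0 ≤ b)
    (hlong : 50 * b < nextAbove P b) (hbw : W b = w) :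
    nextAbove P b ^ 2 + ∑ p ∈ P with 0 ≤ p ∧ W p = w, hop P p ^ 2 +
        ∑ p ∈ -P with 0 ≤ p ∧ W' p = -w, hop (-P) p ^ 2 ≤ 197 / 100 * ρ w ^ 2 := by
  have hw' : 0 ≤ (fun x => ρ (-x)) (-w) := by simpa using hw
  obtain ⟨-, hwb, hreach⟩ := hW b hb hb0
  rw [hbw] at hwb hreach
  have hR := hW.sum_hop_sq_add_le hw
  have hlongSum : nextAbove P b ^ 2 - b ^ 2 ≤
      ∑ p ∈ P with (0 ≤ p ∧ W p = w) ∧ 50 * p < nextAbove P p, (nextAbove P p ^ 2 - p ^ 2) :=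
    single_le_sum (f := fun p => nextAbove P p ^ 2 - p ^ 2)
      (fun p hp => by nlinarith [(mem_filter.1 hp).2.1.1, le_nextAbove P p])
      (mem_filter.2 ⟨hb, ⟨hb0, hbw⟩, hlong⟩)
  have hL := hW'.sum_hop_sq_le_sq hw'
  have hL' := hW'.sum_hop_sq_le hw'
  simp only [neg_neg] at hL hL'
  exact sq_add_add_le_of_long_gap hw hb0 hwb hlong hreach (by nlinarith) hL hL'

end Charge

section Ratio

variable {P : Finset ℝ} {ρ : ℝ → ℝ}

theorem sum_sq_stableAssignment (h0 : 0 ∈ P) :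
    ∑ p ∈ P, stableAssignment P p ^ 2 =
      max (sourceRange P) (sourceRange (-P)) ^ 2 + ∑ p ∈ P with 0 ≤ p, hop P p ^ 2 +
        ∑ p ∈ -P with 0 ≤ p, hop (-P) p ^ 2 := by
  have hsplit : ∀ p, stableAssignment P p ^ 2 =
      (if p = 0 then max (sourceRange P) (sourceRange (-P)) ^ 2 else 0) +
        (if 0 ≤ p then hop P p ^ 2 else 0) + (if 0 ≤ -p then hop (-P) (-p) ^ 2 else 0) := by
    intro p
    rcases lt_trichotomy p 0 with hp | rfl | hp
    · simp [stableAssignment_of_neg hp, hp.ne, hp.not_ge, hp.le]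
    · simp [stableAssignment_zero, hop_zero]
    · simp [stableAssignment_of_pos hp, hp.ne', hp.le, hp]
  rw [sum_congr rfl fun p _ => hsplit p, sum_add_distrib, sum_add_distrib, sum_ite_eq',
    if_pos h0, ← sum_filter, sum_filter (s := -P), sum_neg_index]

theorem sum_sq_stableAssignment_le_of_sourceRange_le (h0 : 0 ∈ P) (hF : Feasible P 0 ρ)
    (hdom : sourceRange (-P) ≤ sourceRange P) :
    ∑ p ∈ P, stableAssignment P p ^ 2 ≤ 197 / 100 * ∑ p ∈ P, ρ p ^ 2 := by
  obtain ⟨W, hW⟩ := hF.exists_isGapWitness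
  obtain ⟨W', hW'⟩ := (by simpa using hF.neg : Feasible (-P) 0 fun x => ρ (-x)).exists_isGapWitness
  have hcost : ∑ p ∈ P, stableAssignment P p ^ 2 = sourceRange P ^ 2 +
      ∑ w ∈ P, (∑ p ∈ P with 0 ≤ p ∧ W p = w, hop P p ^ 2 +
        ∑ p ∈ -P with 0 ≤ p ∧ W' p = -w, hop (-P) p ^ 2) := by
    rw [sum_sq_stableAssignment h0, max_eq_left hdom, sum_add_distrib, hW.sum_fiberwise,
      ← hW'.sum_fiberwise, sum_neg_index, add_assoc]
  rw [hcost, mul_sum]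
  rcases sourceRange_eq_zero_or_exists h0 with h | ⟨b, hb, hb0, hlong, h⟩
  · rw [h, zero_pow two_ne_zero, zero_add]
    exact sum_le_sum fun w hw => hW.charge_le hW' (hF.1 w hw)
  · have hwP := (hW b hb hb0).1
    rw [h, ← add_sum_erase _ _ hwP, ← add_sum_erase _ _ hwP, ← add_assoc, ← add_assoc]
    gcongr ?_ + ?_
    · exact hW.sq_add_charge_le hW' (hF.1 _ hwP) hb hb0 hlong rfl
    · exact sum_le_sum fun w hw => hW.charge_le hW' (hF.1 w (mem_of_mem_erase hw))

theorem sum_sq_stableAssignment_le (h0 : 0 ∈ P) (hF : Feasible P 0 ρ) :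
    ∑ p ∈ P, stableAssignment P p ^ 2 ≤ 197 / 100 * ∑ p ∈ P, ρ p ^ 2 := by
  rcases le_total (sourceRange (-P)) (sourceRange P) with h | h
  · exact sum_sq_stableAssignment_le_of_sourceRange_le h0 hF h
  · have h' := sum_sq_stableAssignment_le_of_sourceRange_le (P := -P) (by simpa using h0)
      (by simpa using hF.neg) (by rwa [neg_neg])
    simpa [sum_neg_index, stableAssignment_neg] using h'

end Ratio

theorem le_mul_opt {X : Type*} [MetricSpace X] {α c x : ℝ} (hc : 0 < c) {P : Finset X} {s : X}
    (hne : ∃ ρ, Feasible P s ρ) (h : ∀ ρ, Feasible P s ρ → x ≤ c * cost α P ρ) :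
    x ≤ c * opt α P s := by
  obtain ⟨ρ, hρ⟩ := hne
  rw [← div_le_iff₀' hc]
  exact le_csInf ⟨_, ρ, hρ, rfl⟩ fun _ ⟨ρ, hρ, hcost⟩ => hcost ▸ (div_le_iff₀' hc).2 (h ρ hρ)

theorem cost_stableAssignment_le {P : Finset ℝ} (h0 : 0 ∈ P) :
    cost 2 P (stableAssignment P) ≤ 1.97 * opt 2 P 0 := by
  have hcost : ∀ ρ : ℝ → ℝ, cost 2 P ρ = ∑ p ∈ P, ρ p ^ 2 :=
    fun ρ => sum_congr rfl fun p _ => Real.rpow_two (ρ p)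
  refine le_mul_opt (by norm_num) ⟨_, feasible_stableAssignment h0⟩ fun ρ hρ => ?_
  rw [hcost, hcost]
  norm_num
  exact sum_sq_stableAssignment_le h0 hρ

end BroadcastR1

/-- There is a 3-stable 1.97-approximation algorithm for the dynamic
broadcast range-assignment problem in ℝ¹ for distance-power gradient α = 2. -/
theorem three_stable_algorithm_R1 :
    ∃ F : Finset ℝ → (ℝ → ℝ),
      (∀ P : Finset ℝ, (0:ℝ) ∈ P →
        Feasible P 0 (F P) ∧ cost 2 P (F P) ≤ 1.97 * opt 2 P 0) ∧
      (∀ P : Finset ℝ, (0:ℝ) ∈ P → ∀ q : ℝ, q ∉ P →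
        {p ∈ insert q (P : Set ℝ) |
          F (insert q P) p ≠ Function.update (F P) q 0 p}.ncard ≤ 3) :=
  ⟨BroadcastR1.stableAssignment, fun _ h0 =>
    ⟨BroadcastR1.feasible_stableAssignment h0, BroadcastR1.cost_stableAssignment_le h0⟩,
    fun P _ q _ => BroadcastR1.ncard_changed_le_three P q⟩
end

section
/- Let α > 1 be real, let k ≥ 1 be an integer, let S ≥ 0, and let r : I → ℝ be a function on a finite index set I with r(i) ≥ 0 for all i and Σ_{i∈I} r(i) ≤ S. Let J ⊆ I be a subset with |J| = k such that r(i) ≤ r(j) for every i ∈ I ∖ J and every j ∈ J (i.e., J consists of k elements with the largest values). Then Σ_{i ∈ I∖J} r(i)^α ≤ S^α / k^{α−1}. (Applied with S = 2·ρ_opt(p*), this is the key inequality in the proof that the canonical range assignment ρ_k is a (1 + 2^α/k^{α−1})-approximation.) -/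
attribute [local instance] Classical.propDecidable

/-- Key inequality of the canonical-range-assignment analysis: if `r` is
nonnegative on a finite set `I` with total sum at most `S`, and `J ⊆ I` consists of `k`
elements with the largest values, then `Σ_{i ∈ I∖J} r(i)^α ≤ S^α / k^{α-1}`. -/
theorem sum_pow_of_largest_removed {ι : Type*} (α : ℝ) (hα : 1 < α)
    (k : ℕ) (hk : 1 ≤ k) (S : ℝ) (hS : 0 ≤ S)
    (I J : Finset ι) (r : ι → ℝ)
    (hr : ∀ i ∈ I, 0 ≤ r i) (hsum : ∑ i ∈ I, r i ≤ S)
    (hJI : J ⊆ I) (hJcard : J.card = k)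
    (hmax : ∀ i ∈ I \ J, ∀ j ∈ J, r i ≤ r j) :
    ∑ i ∈ I \ J, r i ^ α ≤ S ^ α / (k : ℝ) ^ (α - 1) := by
  have hk0 : (0:ℝ) < k := by exact_mod_cast hk
  have hα0 : 0 < α := by linarith
  have hα1 : 0 ≤ α - 1 := by linarith
  have hrd : ∀ i ∈ I \ J, 0 ≤ r i := fun i hi => hr i (Finset.sdiff_subset hi)
  have hJsum : ∑ j ∈ J, r j ≤ S := by
    refine le_trans (Finset.sum_le_sum_of_subset_of_nonneg hJI ?_) hsum
    exact fun i hi _ => hr i hi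
  have hbound : ∀ i ∈ I \ J, r i ≤ S / k := by
    intro i hi
    rw [le_div_iff₀ hk0]
    calc r i * k = ∑ _j ∈ J, r i := by
          rw [Finset.sum_const, hJcard, nsmul_eq_mul, mul_comm]
      _ ≤ ∑ j ∈ J, r j := Finset.sum_le_sum (fun j hj => hmax i hi j hj)
      _ ≤ S := hJsum
  have hc : (0:ℝ) ≤ (S / k) ^ (α - 1) := Real.rpow_nonneg (by positivity) _
  have key : ∀ i ∈ I \ J, r i ^ α ≤ (S / k) ^ (α - 1) * r i := by
    intro i hi
    rcases eq_or_lt_of_le (hrd i hi) with h | h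
    · rw [← h, Real.zero_rpow (ne_of_gt hα0), mul_zero]
    · have : r i ^ α = r i ^ (α - 1) * r i := by
        rw [show α = (α - 1) + 1 by ring, Real.rpow_add h, Real.rpow_one]
        ring_nf
      rw [this]
      exact mul_le_mul_of_nonneg_right
        (Real.rpow_le_rpow (le_of_lt h) (hbound i hi) hα1) (le_of_lt h)
  calc ∑ i ∈ I \ J, r i ^ α ≤ ∑ i ∈ I \ J, (S / k) ^ (α - 1) * r i :=
        Finset.sum_le_sum key
    _ = (S / k) ^ (α - 1) * ∑ i ∈ I \ J, r i := by rw [Finset.mul_sum]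
    _ ≤ (S / k) ^ (α - 1) * S := by
        refine mul_le_mul_of_nonneg_left ?_ hc
        refine le_trans (Finset.sum_le_sum_of_subset_of_nonneg Finset.sdiff_subset ?_) hsum
        exact fun i hi _ => hr i hi
    _ = S ^ α / (k : ℝ) ^ (α - 1) := by
        rcases eq_or_lt_of_le hS with h | h
        · rw [← h, Real.zero_rpow (ne_of_gt hα0), zero_div, zero_div,
            Real.zero_rpow (by linarith : α - 1 ≠ 0), zero_mul]
        · rw [Real.div_rpow (le_of_lt h) (le_of_lt hk0), div_mul_eq_mul_div,
            show α = (α - 1) + 1 by ring, Real.rpow_add h, Real.rpow_one]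
          ring_nf
end

section
/- Let α > 1, let P be a finite set of more than 2 points on the circle S¹ of circumference 1 (the quotient ℝ/ℤ with its arc-length metric), with source s ∈ P. If ρ is an optimal feasible range assignment for P, i.e., ρ is feasible and cost_α(ρ) ≤ cost_α(ρ') for every feasible range assignment ρ' for P, then ρ(p) < 1/2 for every p ∈ P. -/
open Finset

attribute [local instance] Classical.propDecidable

/-- Reachability from `s` within `P` using ranges `ρ`. -/
abbrev Reach {X : Type*} [MetricSpace X] (P : Finset X) (ρ : X → ℝ) (s p : X) : Prop :=
  ∃ (m : ℕ) (f : ℕ → X), f 0 = s ∧ f m = p ∧ (∀ i ≤ m, f i ∈ P) ∧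
    ∀ i < m, dist (f i) (f (i + 1)) ≤ ρ (f i)

lemma reach_refl {X : Type*} [MetricSpace X] {P : Finset X} {ρ : X → ℝ} {p : X}
    (hp : p ∈ P) : Reach P ρ p p :=
  ⟨0, fun _ => p, rfl, rfl, fun _ _ => hp, fun i h => absurd h (Nat.not_lt_zero i)⟩

lemma reach_step {X : Type*} [MetricSpace X] {P : Finset X} {ρ : X → ℝ} {s t u : X}
    (h : Reach P ρ s t) (hu : u ∈ P) (hd : dist t u ≤ ρ t) : Reach P ρ s u := by
  obtain ⟨m, f, h0, hm, hmem, hstep⟩ := h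
  refine ⟨m + 1, fun i => if i ≤ m then f i else u, by simp [h0], by simp, ?_, ?_⟩
  · intro i _
    by_cases h : i ≤ m
    · simpa [h] using hmem i h
    · simp [h, hu]
  · intro i hi
    rcases lt_or_ge i m with h | h
    · have h1 : i ≤ m := h.le
      have h2 : i + 1 ≤ m := h
      simp only [if_pos h1, if_pos h2]
      exact hstep i h
    · have hie : i = m := by omega
      subst hie
      have h2 : ¬ (i + 1 ≤ i) := by omega
      simp only [if_pos le_rfl, if_neg h2, hm]
      exact hd

lemma realkey (x : ℝ) : |x - round x| + |x + 1/2 - round (x + 1/2)| ≤ 1/2 := by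
  have h1 : (⌊x⌋ : ℝ) ≤ x := Int.floor_le x
  have h2 : x < ⌊x⌋ + 1 := Int.lt_floor_add_one x
  have hr2 : round (x + 1/2) = ⌊x⌋ + 1 := by
    rw [round_eq, show x + 1/2 + 1/2 = x + 1 by ring, Int.floor_add_one]
  rcases lt_or_ge x ((⌊x⌋ : ℝ) + 1/2) with h | h
  · have hr1 : round x = ⌊x⌋ := by
      rw [round_eq]
      apply Int.floor_eq_iff.mpr
      constructor <;> push_cast <;> linarith
    rw [hr1, hr2, abs_of_nonneg (by linarith), abs_of_nonpos (by push_cast; linarith)]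
    push_cast; linarith
  · have hr1 : round x = ⌊x⌋ + 1 := by
      rw [round_eq]
      apply Int.floor_eq_iff.mpr
      constructor <;> push_cast <;> linarith
    rw [hr1, hr2, abs_of_nonpos (by push_cast; linarith), abs_of_nonneg (by push_cast; linarith)]
    push_cast; linarith

lemma circle_norm_key (z : AddCircle (1:ℝ)) :
    ‖z‖ + ‖z + ((1/2:ℝ) : AddCircle (1:ℝ))‖ ≤ 1/2 := by
  induction z using QuotientAddGroup.induction_on with
  | H x =>
    have e : ((x : ℝ) : AddCircle (1:ℝ)) + ((1/2:ℝ) : AddCircle (1:ℝ))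
        = ((x + 1/2 : ℝ) : AddCircle (1:ℝ)) := by
      rw [← QuotientAddGroup.mk_add]
    rw [e, AddCircle.norm_eq, AddCircle.norm_eq]
    simp only [inv_one, one_mul, mul_one]
    exact realkey x

lemma circle_dist_key (p q : AddCircle (1:ℝ)) :
    dist p q + dist q (p + ((1/2:ℝ) : AddCircle (1:ℝ))) ≤ 1/2 := by
  have h := circle_norm_key (q - (p + ((1/2:ℝ) : AddCircle (1:ℝ))))
  rw [dist_eq_norm, dist_eq_norm]
  have e1 : q - (p + ((1/2:ℝ) : AddCircle (1:ℝ))) + ((1/2:ℝ) : AddCircle (1:ℝ)) = q - p := by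
    abel
  rw [e1] at h
  have e2 : ‖q - p‖ = ‖p - q‖ := norm_sub_rev _ _
  linarith [h, e2.le, e2.ge]

lemma rpow_add_lt {a b α : ℝ} (ha : 0 < a) (hb : 0 < b) (hα : 1 < α) :
    a ^ α + b ^ α < (a + b) ^ α := by
  have hab : (0:ℝ) < a + b := by linarith
  have h1 : a ^ α = a * a ^ (α - 1) := by
    rw [show α = 1 + (α - 1) by ring, Real.rpow_add ha, Real.rpow_one]
    ring_nf
  have h2 : b ^ α = b * b ^ (α - 1) := by
    rw [show α = 1 + (α - 1) by ring, Real.rpow_add hb, Real.rpow_one]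
    ring_nf
  have h3 : (a + b) ^ α = (a + b) * (a + b) ^ (α - 1) := by
    rw [show α = 1 + (α - 1) by ring, Real.rpow_add hab, Real.rpow_one]
    ring_nf
  have hA : a ^ (α - 1) < (a + b) ^ (α - 1) :=
    Real.rpow_lt_rpow ha.le (by linarith) (by linarith)
  have hB : b ^ (α - 1) < (a + b) ^ (α - 1) :=
    Real.rpow_lt_rpow hb.le (by linarith) (by linarith)
  rw [h1, h2, h3]
  nlinarith [mul_lt_mul_of_pos_left hA ha, mul_lt_mul_of_pos_left hB hb]

/-- In any optimal feasible range assignment for more than 2 points on the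
circle `S¹ = ℝ/ℤ` of circumference 1, every range is smaller than 1/2. -/
theorem optimal_circle_range_lt_half (α : ℝ) (hα : 1 < α)
    (P : Finset (AddCircle (1:ℝ))) (s : AddCircle (1:ℝ)) (hs : s ∈ P) (hcard : 2 < P.card)
    (ρ : AddCircle (1:ℝ) → ℝ) (hfeas : Feasible P s ρ)
    (hopt : ∀ ρ' : AddCircle (1:ℝ) → ℝ, Feasible P s ρ' → cost α P ρ ≤ cost α P ρ') :
    ∀ p ∈ P, ρ p < 1 / 2 := by
  by_contra hcon
  push_neg at hcon
  obtain ⟨p, hp, hρp⟩ := hcon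
  set r : AddCircle (1:ℝ) := p + ((1/2:ℝ) : AddCircle (1:ℝ)) with hrdef
  -- pick the farthest point q of P \ {p, r} from p
  have hne : (P \ {p, r}).Nonempty := by
    rw [← Finset.card_pos]
    have h1 := Finset.card_le_card_sdiff_add_card (s := P) (t := {p, r})
    have h2 : ({p, r} : Finset (AddCircle (1:ℝ))).card ≤ 2 :=
      (Finset.card_insert_le _ _).trans (by simp)
    omega
  obtain ⟨q, hq, hqmax⟩ := Finset.exists_max_image (P \ {p, r}) (fun x => dist p x) hne
  have hqP : q ∈ P := (Finset.mem_sdiff.mp hq).1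
  have hqne : q ≠ p ∧ q ≠ r := by
    have h := (Finset.mem_sdiff.mp hq).2
    simp only [Finset.mem_insert, Finset.mem_singleton, not_or] at h
    exact h
  set a := dist p q with hadef
  set b := dist q r with hbdef
  have ha0 : 0 < a := dist_pos.mpr (fun h => hqne.1 h.symm)
  have hb0 : 0 < b := dist_pos.mpr hqne.2
  have hab : a + b ≤ 1/2 := circle_dist_key p q
  have hmax_all : ∀ x ∈ P, x ≠ r → dist p x ≤ a := by
    intro x hx hxr
    by_cases hxp : x = p
    · simp [hxp, ha0.le]
    · exact hqmax x (Finset.mem_sdiff.mpr ⟨hx, by simp [hxp, hxr]⟩)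
  set M := max (ρ q) b with hMdef
  set ρ' : AddCircle (1:ℝ) → ℝ := fun x => if x = p then a else if x = q then M else ρ x
    with hρ'def
  have hρ'p : ρ' p = a := by simp [hρ'def]
  have hρ'q : ρ' q = M := by simp [hρ'def, hqne.1]
  -- ρ' is feasible
  have hfeas' : Feasible P s ρ' := by
    constructor
    · intro x hx
      by_cases h1 : x = p
      · simp [hρ'def, h1, ha0.le]
      · by_cases h2 : x = q
        · rw [h2, hρ'q]
          exact le_max_of_le_right hb0.le
        · simp only [hρ'def, if_neg h1, if_neg h2]
          exact hfeas.1 x hx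
    · intro p' hp'
      obtain ⟨m, f, h0, hm, hmem, hstep⟩ := hfeas.2 p' hp'
      have key : ∀ i, i ≤ m → Reach P ρ' s (f i) := by
        intro i
        induction i with
        | zero =>
          intro _
          rw [h0]
          exact reach_refl hs
        | succ n ih =>
          intro hle
          have hn : n < m := hle
          have hR := ih hn.le
          have hxP := hmem n hn.le
          have hyP := hmem (n + 1) hle
          by_cases hd : dist (f n) (f (n + 1)) ≤ ρ' (f n)
          · exact reach_step hR hyP hd
          · have hxp : f n = p := by
              by_contra hxp
              apply hd
              by_cases hxq : f n = q
              · have he : ρ' (f n) = M := by rw [hxq, hρ'q]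
                rw [he]
                calc dist (f n) (f (n + 1)) ≤ ρ (f n) := hstep n hn
                  _ = ρ q := by rw [hxq]
                  _ ≤ M := le_max_left _ _
              · have he : ρ' (f n) = ρ (f n) := by simp [hρ'def, hxp, hxq]
                rw [he]
                exact hstep n hn
            have hyr : f (n + 1) = r := by
              by_contra hyr
              apply hd
              rw [hxp, hρ'p]
              exact hmax_all (f (n + 1)) hyP hyr
            have h1 : Reach P ρ' s q := by
              apply reach_step hR hqP
              rw [hxp, hρ'p]
            have h2 : Reach P ρ' s r := by
              apply reach_step h1 (hyr ▸ hyP)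
              rw [hρ'q]
              exact le_max_right _ _
            rw [hyr]
            exact h2
      have := key m le_rfl
      rw [hm] at this
      exact this
  -- ρ' is strictly cheaper
  have hsplit : cost α P ρ' - cost α P ρ = (a ^ α - ρ p ^ α) + (M ^ α - ρ q ^ α) := by
    rw [cost, cost, ← Finset.sum_sub_distrib]
    have hcongr : ∀ x ∈ P, ρ' x ^ α - ρ x ^ α =
        (if x = p then a ^ α - ρ p ^ α else 0) + (if x = q then M ^ α - ρ q ^ α else 0) := by
      intro x _
      by_cases h1 : x = p
      · subst h1
        rw [hρ'p, if_pos rfl, if_neg (fun h => hqne.1 h.symm)]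
        ring
      · by_cases h2 : x = q
        · subst h2
          rw [hρ'q, if_neg h1, if_pos rfl]
          ring
        · have he : ρ' x = ρ x := by simp [hρ'def, h1, h2]
          rw [he, if_neg h1, if_neg h2]
          ring
    rw [Finset.sum_congr rfl hcongr, Finset.sum_add_distrib,
      Finset.sum_ite_eq' P p, Finset.sum_ite_eq' P q, if_pos hp, if_pos hqP]
  have hMa : M ^ α ≤ ρ q ^ α + b ^ α := by
    rcases max_choice (ρ q) b with h | h <;> rw [hMdef, h]
    · nlinarith [Real.rpow_nonneg hb0.le α]
    · nlinarith [Real.rpow_nonneg (hfeas.1 q hqP) α]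
  have hsum : a ^ α + b ^ α < (1/2 : ℝ) ^ α :=
    lt_of_lt_of_le (rpow_add_lt ha0 hb0 hα)
      (Real.rpow_le_rpow (by linarith) hab (by linarith))
  have hhalf : (1/2 : ℝ) ^ α ≤ ρ p ^ α :=
    Real.rpow_le_rpow (by norm_num) hρp (by linarith)
  have hcost : cost α P ρ' < cost α P ρ := by linarith
  exact absurd (hopt ρ' hfeas') (not_le.mpr hcost)
end

section
/- Fix δ with 1/2 < δ < 1 and let ρ_sb(P) denote the source-based range assignment of a finite set P ⊂ ℝ with 0 ∈ P. Then for every q ∈ ℝ ∖ P: the number of points p ∈ P ∪ {q} whose range in ρ_sb(P∪{q}) is strictly larger than its range in ρ_sb(P) is at most 2, and the number of points whose range in ρ_sb(P∪{q}) is strictly smaller than its range in ρ_sb(P) is at most 1, where ρ_sb(P) is extended by assigning range 0 to q. -/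
open Finset

attribute [local instance] Classical.propDecidable

/-- `p` has a successor in `P`: a point of `P` strictly beyond `p` on the same side of the
source 0. -/
def HasSuc (P : Finset ℝ) (p : ℝ) : Prop :=
  (0 < p ∧ ∃ q ∈ P, p < q) ∨ (p < 0 ∧ ∃ q ∈ P, q < p)

/-- The successor of `p` in `P`: the nearest point of `P` strictly to the right of `p` if
`p > 0`, and the nearest point strictly to the left of `p` if `p < 0`. -/
noncomputable def suc (P : Finset ℝ) (p : ℝ) : ℝ :=
  if 0 < p then sInf {q | q ∈ P ∧ p < q} else sSup {q | q ∈ P ∧ q < p}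

/-- The standard range of `p`: the distance to its successor, or 0 if there is none. -/
noncomputable def standardRange (P : Finset ℝ) (p : ℝ) : ℝ :=
  if HasSuc P p then |suc P p - p| else 0

/-- A non-source point is *expensive* if its successor exists and
`|suc(p) - p| > δ·|suc(p)|`. -/
def Expensive (δ : ℝ) (P : Finset ℝ) (p : ℝ) : Prop :=
  HasSuc P p ∧ δ * |suc P p| < |suc P p - p|

/-- `d_max`: the maximum of `|suc(p)|` over expensive non-source points together with the
distances from the source 0 to its nearest neighbour on each side (0 if `P = {0}`). -/
noncomputable def dmax (δ : ℝ) (P : Finset ℝ) : ℝ :=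
  sSup ({x | ∃ p ∈ P, p ≠ (0:ℝ) ∧ Expensive δ P p ∧ x = |suc P p|} ∪
        {x | (∃ q ∈ P, (0:ℝ) < q) ∧ x = sInf {q | q ∈ P ∧ (0:ℝ) < q}} ∪
        {x | (∃ q ∈ P, q < (0:ℝ)) ∧ x = -sSup {q | q ∈ P ∧ q < (0:ℝ)}})

/-- The source-based range assignment `ρ_sb`: the source gets `d_max`, expensive non-source
points get 0, and cheap points get their standard range. -/
noncomputable def rsb (δ : ℝ) (P : Finset ℝ) : ℝ → ℝ := fun p =>
  if p = 0 then dmax δ P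
  else if Expensive δ P p then 0
  else standardRange P p

namespace RsbAux

noncomputable def E (δ : ℝ) (P : Finset ℝ) : Set ℝ :=
  {x | ∃ p ∈ P, p ≠ (0:ℝ) ∧ Expensive δ P p ∧ x = |suc P p|} ∪
  {x | (∃ q ∈ P, (0:ℝ) < q) ∧ x = sInf {q | q ∈ P ∧ (0:ℝ) < q}} ∪
  {x | (∃ q ∈ P, q < (0:ℝ)) ∧ x = -sSup {q | q ∈ P ∧ q < (0:ℝ)}}

lemma dmax_eq (δ : ℝ) (P : Finset ℝ) : dmax δ P = sSup (E δ P) := rfl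

lemma setFin1 (P : Finset ℝ) (c : ℝ) : {r : ℝ | r ∈ P ∧ c < r}.Finite :=
  P.finite_toSet.subset fun _ hx => hx.1

lemma setFin2 (P : Finset ℝ) (c : ℝ) : {r : ℝ | r ∈ P ∧ r < c}.Finite :=
  P.finite_toSet.subset fun _ hx => hx.1

lemma suc_of_pos {P : Finset ℝ} {p : ℝ} (hp : 0 < p) :
    suc P p = sInf {r : ℝ | r ∈ P ∧ p < r} := by unfold suc; rw [if_pos hp]

lemma suc_of_neg {P : Finset ℝ} {p : ℝ} (hp : p < 0) :
    suc P p = sSup {r : ℝ | r ∈ P ∧ r < p} := by unfold suc; rw [if_neg (by linarith)]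

lemma hasSuc_pos {P : Finset ℝ} {p : ℝ} (hp : 0 < p) :
    HasSuc P p ↔ {r : ℝ | r ∈ P ∧ p < r}.Nonempty := by
  constructor
  · rintro (⟨-, r, hr, h⟩ | ⟨h, -⟩)
    · exact ⟨r, hr, h⟩
    · linarith
  · rintro ⟨r, hr, h⟩; exact Or.inl ⟨hp, r, hr, h⟩

lemma hasSuc_neg {P : Finset ℝ} {p : ℝ} (hp : p < 0) :
    HasSuc P p ↔ {r : ℝ | r ∈ P ∧ r < p}.Nonempty := by
  constructor
  · rintro (⟨h, -⟩ | ⟨-, r, hr, h⟩)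
    · linarith
    · exact ⟨r, hr, h⟩
  · rintro ⟨r, hr, h⟩; exact Or.inr ⟨hp, r, hr, h⟩

lemma hasSuc_ne_zero {P : Finset ℝ} {p : ℝ} (h : HasSuc P p) : p ≠ 0 := by
  rcases h with ⟨h, -⟩ | ⟨h, -⟩ <;> intro e <;> rw [e] at h <;> linarith

lemma E_finite (δ : ℝ) (P : Finset ℝ) : (E δ P).Finite := by
  refine Set.Finite.union (Set.Finite.union ?_ ?_) ?_
  · refine (P.finite_toSet.image fun p => |suc P p|).subset ?_
    rintro x ⟨p, hp, -, -, rfl⟩; exact ⟨p, hp, rfl⟩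
  · exact (Set.finite_singleton (sInf {r : ℝ | r ∈ P ∧ 0 < r})).subset
      (by rintro x ⟨-, rfl⟩; rfl)
  · exact (Set.finite_singleton (-sSup {r : ℝ | r ∈ P ∧ r < 0})).subset
      (by rintro x ⟨-, rfl⟩; rfl)

lemma E_nonneg (δ : ℝ) (P : Finset ℝ) : ∀ x ∈ E δ P, 0 ≤ x := by
  rintro x ((⟨p, hp, h0, hexp, rfl⟩ | ⟨⟨r, hr, hr0⟩, rfl⟩) | ⟨⟨r, hr, hr0⟩, rfl⟩)
  · exact abs_nonneg _
  · have h := Set.Nonempty.csInf_mem (⟨r, hr, hr0⟩ : {t : ℝ | t ∈ P ∧ 0 < t}.Nonempty)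
      (setFin1 P 0)
    exact h.2.le
  · have h := Set.Nonempty.csSup_mem (⟨r, hr, hr0⟩ : {t : ℝ | t ∈ P ∧ t < 0}.Nonempty)
      (setFin2 P 0)
    linarith [h.2]

lemma dmax_nonneg (δ : ℝ) (P : Finset ℝ) : 0 ≤ dmax δ P := by
  rw [dmax_eq]; exact Real.sSup_nonneg (E_nonneg δ P)

lemma le_dmax {δ : ℝ} {P : Finset ℝ} {x : ℝ} (h : x ∈ E δ P) : x ≤ dmax δ P := by
  rw [dmax_eq]; exact le_csSup (E_finite δ P).bddAbove h

lemma dmax_le {δ c : ℝ} {P : Finset ℝ} (h0 : 0 ≤ c) (h : ∀ x ∈ E δ P, x ≤ c) :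
    dmax δ P ≤ c := Real.sSup_le h h0

lemma dmax_mono {δ : ℝ} {P Q : Finset ℝ} (h : E δ P ⊆ E δ Q) : dmax δ P ≤ dmax δ Q := by
  rcases Set.eq_empty_or_nonempty (E δ P) with he | hne
  · rw [dmax_eq, he, Real.sSup_empty]; exact dmax_nonneg δ Q
  · rw [dmax_eq, dmax_eq]; exact csSup_le_csSup (E_finite δ Q).bddAbove hne h

lemma rsb_nonneg (δ : ℝ) (P : Finset ℝ) (p : ℝ) : 0 ≤ rsb δ P p := by
  unfold rsb; split_ifs with h1 h2
  · exact dmax_nonneg δ P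
  · exact le_refl 0
  · unfold standardRange; split_ifs
    · exact abs_nonneg _
    · exact le_refl 0

lemma rsb_of_expensive {δ : ℝ} {P : Finset ℝ} {p : ℝ} (hp : p ≠ 0) (h : Expensive δ P p) :
    rsb δ P p = 0 := by unfold rsb; rw [if_neg hp, if_pos h]

lemma transfer {δ p : ℝ} {P₁ P₂ : Finset ℝ} (hp : p ≠ 0) (h1 : suc P₁ p = suc P₂ p)
    (h2 : HasSuc P₁ p ↔ HasSuc P₂ p) :
    rsb δ P₁ p = rsb δ P₂ p ∧ (Expensive δ P₁ p ↔ Expensive δ P₂ p) := by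
  have he : Expensive δ P₁ p ↔ Expensive δ P₂ p := by
    unfold Expensive; rw [h1, h2]
  have hs : standardRange P₁ p = standardRange P₂ p := by
    unfold standardRange; rw [h1]
    by_cases h : HasSuc P₂ p
    · rw [if_pos (h2.2 h), if_pos h]
    · rw [if_neg (fun hh => h (h2.1 hh)), if_neg h]
  refine ⟨?_, he⟩
  unfold rsb; rw [if_neg hp, if_neg hp]
  by_cases h : Expensive δ P₂ p
  · rw [if_pos (he.2 h), if_pos h]
  · rw [if_neg (fun hh => h (he.1 hh)), if_neg h, hs]



lemma neg_setA (P : Finset ℝ) (c : ℝ) :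
    {r : ℝ | r ∈ P.image (fun x => -x) ∧ c < r} = -{r : ℝ | r ∈ P ∧ r < -c} := by
  ext r
  simp only [Set.mem_neg, Set.mem_setOf_eq, Finset.mem_image]
  constructor
  · rintro ⟨⟨u, hu, rfl⟩, h⟩; exact ⟨by simpa using hu, by linarith⟩
  · rintro ⟨h1, h2⟩; exact ⟨⟨-r, h1, neg_neg r⟩, by linarith⟩

lemma neg_setB (P : Finset ℝ) (c : ℝ) :
    {r : ℝ | r ∈ P.image (fun x => -x) ∧ r < c} = -{r : ℝ | r ∈ P ∧ -c < r} := by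
  ext r
  simp only [Set.mem_neg, Set.mem_setOf_eq, Finset.mem_image]
  constructor
  · rintro ⟨⟨u, hu, rfl⟩, h⟩; exact ⟨by simpa using hu, by linarith⟩
  · rintro ⟨h1, h2⟩; exact ⟨⟨-r, h1, neg_neg r⟩, by linarith⟩

lemma sInf_neg_set (s : Set ℝ) : sInf (-s) = -sSup s := by
  rw [Real.sInf_def, neg_neg]

lemma sSup_neg_set (s : Set ℝ) : sSup (-s) = -sInf s := by
  rw [Real.sInf_def, neg_neg]

lemma mirror_suc {P : Finset ℝ} {p : ℝ} (hp : p ≠ 0) :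
    suc (P.image (fun x => -x)) (-p) = -suc P p := by
  rcases hp.lt_or_gt with h | h
  · rw [suc_of_pos (by linarith : (0:ℝ) < -p), suc_of_neg h, neg_setA]
    rw [show -(-p) = p from neg_neg p, sInf_neg_set]
  · rw [suc_of_neg (by linarith : -p < 0), suc_of_pos h, neg_setB]
    rw [show -(-p) = p from neg_neg p, sSup_neg_set]

lemma mirror_hasSuc {P : Finset ℝ} {p : ℝ} :
    HasSuc (P.image (fun x => -x)) (-p) ↔ HasSuc P p := by
  constructor
  · rintro (⟨h0, r, hr, hlt⟩ | ⟨h0, r, hr, hlt⟩)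
    · obtain ⟨u, hu, rfl⟩ := Finset.mem_image.1 hr
      exact Or.inr ⟨by linarith, u, hu, by linarith⟩
    · obtain ⟨u, hu, rfl⟩ := Finset.mem_image.1 hr
      exact Or.inl ⟨by linarith, u, hu, by linarith⟩
  · rintro (⟨h0, r, hr, hlt⟩ | ⟨h0, r, hr, hlt⟩)
    · exact Or.inr ⟨by linarith, -r, Finset.mem_image_of_mem _ hr, by linarith⟩
    · exact Or.inl ⟨by linarith, -r, Finset.mem_image_of_mem _ hr, by linarith⟩

lemma mirror_sr {P : Finset ℝ} {p : ℝ} :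
    standardRange (P.image (fun x => -x)) (-p) = standardRange P p := by
  unfold standardRange
  by_cases h : HasSuc P p
  · have hp : p ≠ 0 := hasSuc_ne_zero h
    rw [if_pos (mirror_hasSuc.2 h), if_pos h, mirror_suc hp,
      show -suc P p - -p = -(suc P p - p) from by ring, abs_neg]
  · rw [if_neg h, if_neg (fun hh => h (mirror_hasSuc.1 hh))]

lemma mirror_exp {δ : ℝ} {P : Finset ℝ} {p : ℝ} (hp : p ≠ 0) :
    Expensive δ (P.image (fun x => -x)) (-p) ↔ Expensive δ P p := by
  unfold Expensive
  rw [mirror_suc hp, mirror_hasSuc, abs_neg,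
    show -suc P p - -p = -(suc P p - p) from by ring, abs_neg]

lemma mirror_dmax {δ : ℝ} {P : Finset ℝ} : dmax δ (P.image (fun x => -x)) = dmax δ P := by
  rw [dmax_eq, dmax_eq]
  congr 1
  have hpos : {r : ℝ | r ∈ P.image (fun x => -x) ∧ (0:ℝ) < r} = -{r : ℝ | r ∈ P ∧ r < 0} := by
    have := neg_setA P 0; simpa using this
  have hneg : {r : ℝ | r ∈ P.image (fun x => -x) ∧ r < (0:ℝ)} = -{r : ℝ | r ∈ P ∧ 0 < r} := by
    have := neg_setB P 0; simpa using this
  ext x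
  simp only [E, Set.mem_union, Set.mem_setOf_eq]
  constructor
  · rintro ((⟨p, hp, hp0, hexp, rfl⟩ | ⟨⟨r, hr, hr0⟩, rfl⟩) | ⟨⟨r, hr, hr0⟩, rfl⟩)
    · obtain ⟨u, hu, rfl⟩ := Finset.mem_image.1 hp
      have hu0 : u ≠ 0 := fun e => hp0 (by rw [e, neg_zero])
      exact Or.inl (Or.inl ⟨u, hu, hu0, (mirror_exp hu0).1 hexp, by rw [mirror_suc hu0, abs_neg]⟩)
    · obtain ⟨u, hu, rfl⟩ := Finset.mem_image.1 hr
      refine Or.inr ⟨⟨u, hu, by linarith⟩, ?_⟩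
      rw [hpos, sInf_neg_set]
    · obtain ⟨u, hu, rfl⟩ := Finset.mem_image.1 hr
      refine Or.inl (Or.inr ⟨⟨u, hu, by linarith⟩, ?_⟩)
      rw [hneg, sSup_neg_set, neg_neg]
  · rintro ((⟨p, hp, hp0, hexp, rfl⟩ | ⟨⟨r, hr, hr0⟩, rfl⟩) | ⟨⟨r, hr, hr0⟩, rfl⟩)
    · refine Or.inl (Or.inl ⟨-p, Finset.mem_image_of_mem _ hp, by simpa using hp0,
        (mirror_exp hp0).2 hexp, by rw [mirror_suc hp0, abs_neg]⟩)
    · refine Or.inr ⟨⟨-r, Finset.mem_image_of_mem _ hr, by linarith⟩, ?_⟩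
      rw [hneg, sSup_neg_set, neg_neg]
    · refine Or.inl (Or.inr ⟨⟨-r, Finset.mem_image_of_mem _ hr, by linarith⟩, ?_⟩)
      rw [hpos, sInf_neg_set]

lemma mirror_rsb {δ : ℝ} {P : Finset ℝ} (p : ℝ) :
    rsb δ (P.image (fun x => -x)) (-p) = rsb δ P p := by
  unfold rsb
  by_cases hp : p = 0
  · rw [hp]; rw [if_pos (by norm_num), if_pos rfl, mirror_dmax]
  · rw [if_neg hp, if_neg (by simpa using hp)]
    by_cases he : Expensive δ P p
    · rw [if_pos ((mirror_exp hp).2 he), if_pos he]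
    · rw [if_neg (fun hh => he ((mirror_exp hp).1 hh)), if_neg he, mirror_sr]



lemma ins_lt_eq (P : Finset ℝ) {q p : ℝ} (h : ¬ p < q) :
    {r : ℝ | r ∈ insert q P ∧ p < r} = {r : ℝ | r ∈ P ∧ p < r} := by
  ext r; simp only [Set.mem_setOf_eq, Finset.mem_insert]
  constructor
  · rintro ⟨rfl | hr, hpr⟩
    · exact absurd hpr h
    · exact ⟨hr, hpr⟩
  · exact fun ⟨hr, hpr⟩ => ⟨Or.inr hr, hpr⟩

lemma ins_lt_insert (P : Finset ℝ) {q p : ℝ} (h : p < q) :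
    {r : ℝ | r ∈ insert q P ∧ p < r} = insert q {r : ℝ | r ∈ P ∧ p < r} := by
  ext r; simp only [Set.mem_setOf_eq, Finset.mem_insert, Set.mem_insert_iff]
  constructor
  · rintro ⟨rfl | hr, hpr⟩
    · exact Or.inl rfl
    · exact Or.inr ⟨hr, hpr⟩
  · rintro (rfl | ⟨hr, hpr⟩)
    · exact ⟨Or.inl rfl, h⟩
    · exact ⟨Or.inr hr, hpr⟩

lemma ins_gt_eq (P : Finset ℝ) {q p : ℝ} (h : ¬ q < p) :
    {r : ℝ | r ∈ insert q P ∧ r < p} = {r : ℝ | r ∈ P ∧ r < p} := by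
  ext r; simp only [Set.mem_setOf_eq, Finset.mem_insert]
  constructor
  · rintro ⟨rfl | hr, hpr⟩
    · exact absurd hpr h
    · exact ⟨hr, hpr⟩
  · exact fun ⟨hr, hpr⟩ => ⟨Or.inr hr, hpr⟩

lemma same_neg {P : Finset ℝ} {q p : ℝ} (hq0 : 0 < q) (hp : p < 0) :
    suc (insert q P) p = suc P p ∧ (HasSuc (insert q P) p ↔ HasSuc P p) := by
  have hs := ins_gt_eq P (q := q) (p := p) (by linarith)
  exact ⟨by rw [suc_of_neg hp, suc_of_neg hp, hs], by rw [hasSuc_neg hp, hasSuc_neg hp, hs]⟩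

lemma same_above {P : Finset ℝ} {q p : ℝ} (hq0 : 0 < q) (h : q < p) :
    suc (insert q P) p = suc P p ∧ (HasSuc (insert q P) p ↔ HasSuc P p) := by
  have hp : 0 < p := lt_trans hq0 h
  have hs := ins_lt_eq P (q := q) (p := p) (not_lt.2 h.le)
  exact ⟨by rw [suc_of_pos hp, suc_of_pos hp, hs], by rw [hasSuc_pos hp, hasSuc_pos hp, hs]⟩

lemma main_pos (δ : ℝ) (hδ : 1 / 2 < δ) (hδ1 : δ < 1)
    (P : Finset ℝ) (hP : (0:ℝ) ∈ P) (q : ℝ) (hq : q ∉ P) (hq0 : 0 < q) :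
    {p ∈ insert q (P : Set ℝ) |
        Function.update (rsb δ P) q 0 p < rsb δ (insert q P) p}.ncard ≤ 2 ∧
    {p ∈ insert q (P : Set ℝ) |
        rsb δ (insert q P) p < Function.update (rsb δ P) q 0 p}.ncard ≤ 1 := by
  have hq0' : q ≠ 0 := ne_of_gt hq0
  have h0q : (0:ℝ) ≠ q := fun e => hq0' e.symm
  set P' := insert q P with hP'def
  have hupd : ∀ p : ℝ, p ≠ q → Function.update (rsb δ P) q 0 p = rsb δ P p :=
    fun p hp => Function.update_of_ne hp 0 (rsb δ P)
  have hupdq : Function.update (rsb δ P) q 0 q = 0 := Function.update_self q 0 (rsb δ P)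
  have e0old : rsb δ P 0 = dmax δ P := by unfold rsb; rw [if_pos rfl]
  have e0new : rsb δ P' 0 = dmax δ P' := by unfold rsb; rw [if_pos rfl]
  set Sq := {r : ℝ | r ∈ P ∧ q < r} with hSqdef
  have hsucq : suc P' q = sInf Sq := by rw [suc_of_pos hq0, ins_lt_eq P (lt_irrefl q)]
  have hhasq : HasSuc P' q ↔ Sq.Nonempty := by rw [hasSuc_pos hq0, ins_lt_eq P (lt_irrefl q)]
  set A := {r : ℝ | r ∈ P ∧ 0 < r ∧ r < q} with hAdef
  have hAfin : A.Finite := P.finite_toSet.subset fun x hx => hx.1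
  have hnegset : {r : ℝ | r ∈ P' ∧ r < (0:ℝ)} = {r : ℝ | r ∈ P ∧ r < (0:ℝ)} :=
    ins_gt_eq P (by linarith)
  by_cases hA : A.Nonempty
  · have hp0A : sSup A ∈ A := Set.Nonempty.csSup_mem hA hAfin
    set p0 := sSup A with hp0def
    obtain ⟨hp0P, hp00, hp0q⟩ := hp0A
    have hp0ne : p0 ≠ 0 := ne_of_gt hp00
    have hp0neq : p0 ≠ q := ne_of_lt hp0q
    have hleA : ∀ r ∈ A, r ≤ p0 := fun r hr => le_csSup hAfin.bddAbove hr
    have hkey : {r : ℝ | r ∈ P ∧ p0 < r} = Sq := by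
      ext r; simp only [Set.mem_setOf_eq, hSqdef]
      constructor
      · rintro ⟨hr, hlt⟩
        refine ⟨hr, ?_⟩
        by_contra hh
        push_neg at hh
        have hrq : r < q := lt_of_le_of_ne hh (fun e => hq (e ▸ hr))
        have : r ≤ p0 := hleA r ⟨hr, lt_trans hp00 hlt, hrq⟩
        linarith
      · rintro ⟨hr, hlt⟩; exact ⟨hr, lt_trans hp0q hlt⟩
    have hsucp0old : suc P p0 = sInf Sq := by rw [suc_of_pos hp00, hkey]
    have hhasp0old : HasSuc P p0 ↔ Sq.Nonempty := by rw [hasSuc_pos hp00, hkey]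
    have hsucp0new : suc P' p0 = q := by
      rw [suc_of_pos hp00, ins_lt_insert P hp0q, hkey]
      rcases Set.eq_empty_or_nonempty Sq with he | hne
      · rw [he]; simp
      · rw [csInf_insert (setFin1 P q).bddBelow hne]
        have : q ≤ sInf Sq := le_csInf hne (fun r hr => hr.2.le)
        exact inf_eq_left.2 this
    have hmid : ∀ p ∈ P, 0 < p → p < q → p ≠ p0 →
        suc P' p = suc P p ∧ (HasSuc P' p ↔ HasSuc P p) := by
      intro p hp h0 hpq hne
      have hpp0 : p < p0 := lt_of_le_of_ne (hleA p ⟨hp, h0, hpq⟩) hne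
      have hSne : {r : ℝ | r ∈ P ∧ p < r}.Nonempty := ⟨p0, hp0P, hpp0⟩
      have hsi : sInf {r : ℝ | r ∈ P ∧ p < r} ≤ p0 :=
        csInf_le (setFin1 P p).bddBelow ⟨hp0P, hpp0⟩
      constructor
      · rw [suc_of_pos h0, suc_of_pos h0, ins_lt_insert P hpq,
          csInf_insert (setFin1 P p).bddBelow hSne]
        exact inf_eq_right.2 (by linarith)
      · rw [hasSuc_pos h0, hasSuc_pos h0, ins_lt_insert P hpq]
        exact iff_of_true (Set.insert_nonempty q _) hSne
    have hsame : ∀ p ∈ P, p ≠ 0 → p ≠ p0 →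
        suc P' p = suc P p ∧ (HasSuc P' p ↔ HasSuc P p) := by
      intro p hp hpz hpp0
      rcases lt_trichotomy p 0 with h | h | h
      · exact same_neg hq0 h
      · exact absurd h hpz
      · rcases lt_trichotomy p q with hh | hh | hh
        · exact hmid p hp h hh hpp0
        · exact absurd (hh ▸ hp) hq
        · exact same_above hq0 hh
    have hrsb_same : ∀ p ∈ P, p ≠ 0 → p ≠ p0 → rsb δ P' p = rsb δ P p := fun p hp h1 h2 =>
      (transfer h1 (hsame p hp h1 h2).1 (hsame p hp h1 h2).2).1
    have hposset : {r : ℝ | r ∈ P' ∧ (0:ℝ) < r} = insert q {r : ℝ | r ∈ P ∧ (0:ℝ) < r} :=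
      ins_lt_insert P hq0
    have hposP_ne : {r : ℝ | r ∈ P ∧ (0:ℝ) < r}.Nonempty := ⟨p0, hp0P, hp00⟩
    have hsinfpos_le : sInf {r : ℝ | r ∈ P ∧ (0:ℝ) < r} ≤ p0 :=
      csInf_le (setFin1 P 0).bddBelow ⟨hp0P, hp00⟩
    constructor
    · -- increases
      by_cases hSq : Sq.Nonempty
      · obtain ⟨hsP, hqs⟩ := Set.Nonempty.csInf_mem hSq (setFin1 P q)
        have hs0 : 0 < sInf Sq := lt_trans hq0 hqs
        have hdmax : dmax δ P' ≤ dmax δ P := by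
          refine dmax_le (dmax_nonneg δ P) ?_
          rintro x ((⟨p, hpP', hpz, hexp, rfl⟩ | ⟨⟨r, hr, hr0⟩, rfl⟩) | ⟨⟨r, hr, hr0⟩, rfl⟩)
          · by_cases hpq : p = q
            · subst hpq
              have h2 := hexp.2
              rw [hsucq] at h2
              have hexp0 : Expensive δ P p0 := by
                refine ⟨hhasp0old.2 hSq, ?_⟩
                rw [hsucp0old, abs_of_pos hs0,
                  abs_of_pos (by linarith : (0:ℝ) < sInf Sq - p0)]
                rw [abs_of_pos hs0, abs_of_pos (by linarith : (0:ℝ) < sInf Sq - p)] at h2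
                linarith
              calc |suc P' p| = |suc P p0| := by rw [hsucq, hsucp0old]
                _ ≤ dmax δ P := le_dmax (Or.inl (Or.inl ⟨p0, hp0P, hp0ne, hexp0, rfl⟩))
            · have hpP : p ∈ P := (Finset.mem_insert.1 hpP').resolve_left hpq
              by_cases hpp0 : p = p0
              · subst hpp0
                have h2 := hexp.2
                rw [hsucp0new, abs_of_pos hq0,
                  abs_of_pos (by linarith : (0:ℝ) < q - p0)] at h2
                have hd : δ * (sInf Sq - q) < sInf Sq - q :=
                  mul_lt_of_lt_one_left (by linarith) hδ1
                have hexp0 : Expensive δ P p0 := by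
                  refine ⟨hhasp0old.2 hSq, ?_⟩
                  rw [hsucp0old, abs_of_pos hs0,
                    abs_of_pos (by linarith : (0:ℝ) < sInf Sq - p0)]
                  linarith
                rw [hsucp0new, abs_of_pos hq0]
                refine le_trans (le_of_lt hqs) ?_
                calc sInf Sq = |suc P p0| := by rw [hsucp0old, abs_of_pos hs0]
                  _ ≤ dmax δ P := le_dmax (Or.inl (Or.inl ⟨p0, hpP, hp0ne, hexp0, rfl⟩))
              · have hh := hsame p hpP hpz hpp0
                rw [hh.1]
                exact le_dmax (Or.inl (Or.inl ⟨p, hpP, hpz,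
                  ((transfer (δ := δ) hpz hh.1 hh.2).2).1 hexp, rfl⟩))
          · rw [hposset]
            have hle : sInf (insert q {r : ℝ | r ∈ P ∧ (0:ℝ) < r}) ≤
                sInf {r : ℝ | r ∈ P ∧ (0:ℝ) < r} :=
              csInf_le_csInf (((setFin1 P 0).insert q).bddBelow) hposP_ne
                (Set.subset_insert q _)
            exact le_trans hle (le_dmax (Or.inl (Or.inr ⟨⟨p0, hp0P, hp00⟩, rfl⟩)))
          · rw [hnegset]
            have hrP : r ∈ P := by
              rcases Finset.mem_insert.1 hr with rfl | h
              · linarith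
              · exact h
            exact le_dmax (Or.inr ⟨⟨r, hrP, hr0⟩, rfl⟩)
        refine le_trans (Set.ncard_le_ncard ?_ ((Set.finite_singleton q).insert p0))
          (le_trans (Set.ncard_insert_le p0 {q}) (by simp))
        rintro p ⟨hmem, hlt⟩
        rcases Set.mem_insert_iff.1 hmem with rfl | hpP
        · exact Or.inr rfl
        by_cases hpz : p = 0
        · exfalso
          subst hpz
          rw [hupd 0 h0q, e0old, e0new] at hlt
          linarith
        by_cases hpp0 : p = p0
        · exact Or.inl hpp0
        · exfalso
          rw [hupd p (fun e => hq (e ▸ hpP)), hrsb_same p hpP hpz hpp0] at hlt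
          exact lt_irrefl _ hlt
      · have hrsbq : rsb δ P' q = 0 := by
          have hnh : ¬ HasSuc P' q := fun hh => hSq (hhasq.1 hh)
          unfold rsb
          rw [if_neg hq0', if_neg (fun hh : Expensive δ P' q => hnh hh.1)]
          unfold standardRange; rw [if_neg hnh]
        refine le_trans (Set.ncard_le_ncard ?_ ((Set.finite_singleton p0).insert 0))
          (le_trans (Set.ncard_insert_le (0:ℝ) {p0}) (by simp))
        rintro p ⟨hmem, hlt⟩
        rcases Set.mem_insert_iff.1 hmem with rfl | hpP
        · exfalso; rw [hupdq, hrsbq] at hlt; exact lt_irrefl 0 hlt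
        by_cases hpz : p = 0
        · exact Or.inl hpz
        by_cases hpp0 : p = p0
        · exact Or.inr hpp0
        · exfalso
          rw [hupd p (fun e => hq (e ▸ hpP)), hrsb_same p hpP hpz hpp0] at hlt
          exact lt_irrefl _ hlt
    · -- decreases, A nonempty
      by_cases hp0D : rsb δ P' p0 < rsb δ P p0
      · have hpos : 0 < rsb δ P p0 := lt_of_le_of_lt (rsb_nonneg δ P' p0) hp0D
        have hnexp : ¬ Expensive δ P p0 := fun he => by
          rw [rsb_of_expensive hp0ne he] at hpos; linarith
        have hEsub : E δ P ⊆ E δ P' := by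
          rintro x ((⟨p, hpP, hpz, hexp, rfl⟩ | ⟨⟨r, hr, hr0⟩, rfl⟩) | ⟨⟨r, hr, hr0⟩, rfl⟩)
          · have hpp0 : p ≠ p0 := fun e => hnexp (e ▸ hexp)
            have hh := hsame p hpP hpz hpp0
            exact Or.inl (Or.inl ⟨p, Finset.mem_insert_of_mem hpP, hpz,
              ((transfer (δ := δ) hpz hh.1 hh.2).2).2 hexp, by rw [hh.1]⟩)
          · refine Or.inl (Or.inr ⟨⟨r, Finset.mem_insert_of_mem hr, hr0⟩, ?_⟩)
            rw [hposset, csInf_insert (setFin1 P 0).bddBelow hposP_ne]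
            exact (inf_eq_right.2 (by linarith)).symm
          · refine Or.inr ⟨⟨r, Finset.mem_insert_of_mem hr, hr0⟩, ?_⟩
            rw [hnegset]
        have hdm : dmax δ P ≤ dmax δ P' := dmax_mono hEsub
        refine le_trans (Set.ncard_le_ncard ?_ (Set.finite_singleton p0)) (by simp)
        rintro p ⟨hmem, hlt⟩
        rcases Set.mem_insert_iff.1 hmem with rfl | hpP
        · exfalso; rw [hupdq] at hlt; exact absurd hlt (not_lt.2 (rsb_nonneg δ P' p))
        by_cases hpz : p = 0
        · exfalso
          subst hpz
          rw [hupd 0 h0q, e0old, e0new] at hlt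
          linarith
        by_cases hpp0 : p = p0
        · exact hpp0
        · exfalso
          rw [hupd p (fun e => hq (e ▸ hpP)), hrsb_same p hpP hpz hpp0] at hlt
          exact lt_irrefl _ hlt
      · refine le_trans (Set.ncard_le_ncard ?_ (Set.finite_singleton (0:ℝ))) (by simp)
        rintro p ⟨hmem, hlt⟩
        rcases Set.mem_insert_iff.1 hmem with rfl | hpP
        · exfalso; rw [hupdq] at hlt; exact absurd hlt (not_lt.2 (rsb_nonneg δ P' p))
        by_cases hpz : p = 0
        · exact hpz
        by_cases hpp0 : p = p0
        · exfalso; subst hpp0; rw [hupd p0 hp0neq] at hlt; exact hp0D hlt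
        · exfalso
          rw [hupd p (fun e => hq (e ▸ hpP)), hrsb_same p hpP hpz hpp0] at hlt
          exact lt_irrefl _ hlt
  · -- A empty
    have hsame0 : ∀ p ∈ P, p ≠ 0 → rsb δ P' p = rsb δ P p := by
      intro p hp hpz
      rcases lt_trichotomy p 0 with h | h | h
      · exact (transfer hpz (same_neg hq0 h).1 (same_neg hq0 h).2).1
      · exact absurd h hpz
      · have hpq : q < p := by
          rcases lt_trichotomy p q with hh | hh | hh
          · exact absurd (⟨p, hp, h, hh⟩ : A.Nonempty) hA
          · exact absurd (hh ▸ hp) hq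
          · exact hh
        exact (transfer hpz (same_above hq0 hpq).1 (same_above hq0 hpq).2).1
    constructor
    · refine le_trans (Set.ncard_le_ncard ?_ ((Set.finite_singleton q).insert 0))
        (le_trans (Set.ncard_insert_le (0:ℝ) {q}) (by simp))
      rintro p ⟨hmem, hlt⟩
      rcases Set.mem_insert_iff.1 hmem with rfl | hpP
      · exact Or.inr rfl
      by_cases hpz : p = 0
      · exact Or.inl hpz
      · exfalso
        rw [hupd p (fun e => hq (e ▸ hpP)), hsame0 p hpP hpz] at hlt
        exact lt_irrefl _ hlt
    · refine le_trans (Set.ncard_le_ncard ?_ (Set.finite_singleton (0:ℝ))) (by simp)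
      rintro p ⟨hmem, hlt⟩
      rcases Set.mem_insert_iff.1 hmem with rfl | hpP
      · exfalso; rw [hupdq] at hlt; exact absurd hlt (not_lt.2 (rsb_nonneg δ P' p))
      by_cases hpz : p = 0
      · exact hpz
      · exfalso
        rw [hupd p (fun e => hq (e ▸ hpP)), hsame0 p hpP hpz] at hlt
        exact lt_irrefl _ hlt

end RsbAux

/-- Stability of the source-based range assignment: upon inserting a point
`q`, at most 2 ranges strictly increase and at most 1 range strictly decreases. -/
theorem rsb_stability (δ : ℝ) (hδ : 1 / 2 < δ) (hδ1 : δ < 1)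
    (P : Finset ℝ) (hP : (0:ℝ) ∈ P) (q : ℝ) (hq : q ∉ P) :
    {p ∈ insert q (P : Set ℝ) |
        Function.update (rsb δ P) q 0 p < rsb δ (insert q P) p}.ncard ≤ 2 ∧
    {p ∈ insert q (P : Set ℝ) |
        rsb δ (insert q P) p < Function.update (rsb δ P) q 0 p}.ncard ≤ 1 := by
  have hqz : q ≠ 0 := fun e => hq (e ▸ hP)
  rcases hqz.lt_or_gt with hneg | hpos
  · -- q < 0 : reduce to the positive case by reflection
    set Q := P.image (fun x : ℝ => -x) with hQ
    have hPQ : (0:ℝ) ∈ Q := by rw [hQ]; exact Finset.mem_image.2 ⟨0, hP, neg_zero⟩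
    have hqQ : -q ∉ Q := by
      intro h
      rw [hQ] at h
      obtain ⟨u, hu, he⟩ := Finset.mem_image.1 h
      have : u = q := by linarith
      exact hq (this ▸ hu)
    obtain ⟨h1, h2⟩ := RsbAux.main_pos δ hδ hδ1 Q hPQ (-q) hqQ (by linarith)
    have hins : insert (-q) Q = (insert q P).image (fun x : ℝ => -x) := by
      rw [hQ]; exact (Finset.image_insert _ q P).symm
    have hvals : ∀ p : ℝ, rsb δ (insert (-q) Q) (-p) = rsb δ (insert q P) p := by
      intro p; rw [hins]; exact RsbAux.mirror_rsb p
    have hvals2 : ∀ p : ℝ, Function.update (rsb δ Q) (-q) 0 (-p) =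
        Function.update (rsb δ P) q 0 p := by
      intro p
      by_cases hpq : p = q
      · subst hpq; rw [Function.update_self, Function.update_self]
      · rw [Function.update_of_ne (fun e : -p = -q => hpq (by linarith)) 0 (rsb δ Q),
          Function.update_of_ne hpq 0 (rsb δ P), hQ]
        exact RsbAux.mirror_rsb p
    have hmem : ∀ p : ℝ, p ∈ insert q (P : Set ℝ) ↔ -p ∈ insert (-q) (Q : Set ℝ) := by
      intro p
      simp only [Set.mem_insert_iff, hQ, Finset.coe_image, Set.mem_image, Finset.mem_coe]
      constructor
      · rintro (rfl | h)
        · exact Or.inl rfl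
        · exact Or.inr ⟨p, h, rfl⟩
      · rintro (h | ⟨u, hu, he⟩)
        · left; linarith
        · have : u = p := by linarith
          right; exact this ▸ hu
    have himgI : {p ∈ insert q (P:Set ℝ) |
          Function.update (rsb δ P) q 0 p < rsb δ (insert q P) p}
        = (fun x : ℝ => -x) '' {p ∈ insert (-q) (Q:Set ℝ) |
          Function.update (rsb δ Q) (-q) 0 p < rsb δ (insert (-q) Q) p} := by
      ext p
      constructor
      · rintro ⟨hm, hlt⟩
        exact ⟨-p, ⟨(hmem p).1 hm, by rw [hvals2 p, hvals p]; exact hlt⟩, neg_neg p⟩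
      · rintro ⟨y, ⟨hm, hlt⟩, rfl⟩
        refine ⟨(hmem (-y)).2 (by rw [neg_neg]; exact hm), ?_⟩
        have e1 := hvals (-y); rw [neg_neg] at e1
        have e2 := hvals2 (-y); rw [neg_neg] at e2
        rw [← e2, ← e1]; exact hlt
    have himgD : {p ∈ insert q (P:Set ℝ) |
          rsb δ (insert q P) p < Function.update (rsb δ P) q 0 p}
        = (fun x : ℝ => -x) '' {p ∈ insert (-q) (Q:Set ℝ) |
          rsb δ (insert (-q) Q) p < Function.update (rsb δ Q) (-q) 0 p} := by
      ext p
      constructor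
      · rintro ⟨hm, hlt⟩
        exact ⟨-p, ⟨(hmem p).1 hm, by rw [hvals2 p, hvals p]; exact hlt⟩, neg_neg p⟩
      · rintro ⟨y, ⟨hm, hlt⟩, rfl⟩
        refine ⟨(hmem (-y)).2 (by rw [neg_neg]; exact hm), ?_⟩
        have e1 := hvals (-y); rw [neg_neg] at e1
        have e2 := hvals2 (-y); rw [neg_neg] at e2
        rw [← e2, ← e1]; exact hlt
    constructor
    · rw [himgI, Set.ncard_image_of_injective _ neg_injective]; exact h1
    · rw [himgD, Set.ncard_image_of_injective _ neg_injective]; exact h2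
  · exact RsbAux.main_pos δ hδ hδ1 P hP q hq hpos
end
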